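/- arXiv:2305.06714 — 6 statements merged into one kernel-verified Lean document; each statement's English description precedes it below -/
import Mathlib

section
/- Let X be a crossed double category (the codomain functor d0 : X1 → X0 is an opfibration, and d1 : X2 → X1 and s : X0 → X1 are morphisms of opfibrations). Then the category of corners Cnr(X) — with objects the objects of X and morphisms equivalence classes of corners (a vertical morphism followed by a horizontal morphism), composed by filling the middle corner with an opcartesian square — is a well-defined category: composition is independent of the choice of opcartesian filler squares, is associative, and has identities given by [1_a, 1_a]. -/
open CategoryTheory

universe u

namespace Paper

/-- A (strict) double category, presented elementarily: objects, vertical morphisms,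
horizontal morphisms and squares, with vertical and horizontal compositions of squares. -/
structure DblCat : Type (u + 1) where
  Obj : Type u
  Ver : Obj → Obj → Type u
  Hor : Obj → Obj → Type u
  vId : ∀ a, Ver a a
  vComp : ∀ {a b c}, Ver a b → Ver b c → Ver a c
  hId : ∀ a, Hor a a
  hComp : ∀ {a b c}, Hor a b → Hor b c → Hor a c
  vId_comp : ∀ {a b} (f : Ver a b), vComp (vId a) f = f
  vComp_id : ∀ {a b} (f : Ver a b), vComp f (vId b) = f
  vAssoc : ∀ {a b c d} (f : Ver a b) (g : Ver b c) (h : Ver c d),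
    vComp (vComp f g) h = vComp f (vComp g h)
  hId_comp : ∀ {a b} (f : Hor a b), hComp (hId a) f = f
  hComp_id : ∀ {a b} (f : Hor a b), hComp f (hId b) = f
  hAssoc : ∀ {a b c d} (f : Hor a b) (g : Hor b c) (h : Hor c d),
    hComp (hComp f g) h = hComp f (hComp g h)
  /-- squares, indexed by top, left, right, bottom boundary -/
  Sq : ∀ {a b c d}, Hor a b → Ver a c → Ver b d → Hor c d → Type u
  vSq : ∀ {a b c d e f : Obj} {t : Hor a b} {l : Ver a c} {r : Ver b d} {m : Hor c d}
    {l' : Ver c e} {r' : Ver d f} {bo : Hor e f},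
    Sq t l r m → Sq m l' r' bo → Sq t (vComp l l') (vComp r r') bo
  hSq : ∀ {a b c a' b' c' : Obj} {t1 : Hor a b} {t2 : Hor b c} {l : Ver a a'} {m : Ver b b'}
    {r : Ver c c'} {b1 : Hor a' b'} {b2 : Hor b' c'},
    Sq t1 l m b1 → Sq t2 m r b2 → Sq (hComp t1 t2) l r (hComp b1 b2)
  vIdSq : ∀ {a b} (g : Hor a b), Sq g (vId a) (vId b) g
  hIdSq : ∀ {a b} (u : Ver a b), Sq (hId a) u u (hId b)
  vSq_id_comp : ∀ {a b c d} {t : Hor a b} {l : Ver a c} {r : Ver b d} {bo : Hor c d}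
    (α : Sq t l r bo), HEq (vSq (vIdSq t) α) α
  vSq_comp_id : ∀ {a b c d} {t : Hor a b} {l : Ver a c} {r : Ver b d} {bo : Hor c d}
    (α : Sq t l r bo), HEq (vSq α (vIdSq bo)) α
  vSq_assoc : ∀ {a b c d e f g h : Obj} {t : Hor a b} {l : Ver a c} {r : Ver b d}
    {m1 : Hor c d} {l' : Ver c e} {r' : Ver d f} {m2 : Hor e f}
    {l'' : Ver e g} {r'' : Ver f h} {bo : Hor g h}
    (α : Sq t l r m1) (β : Sq m1 l' r' m2) (γ : Sq m2 l'' r'' bo),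
    HEq (vSq (vSq α β) γ) (vSq α (vSq β γ))
  hSq_id_comp : ∀ {a b c d} {t : Hor a b} {l : Ver a c} {r : Ver b d} {bo : Hor c d}
    (α : Sq t l r bo), HEq (hSq (hIdSq l) α) α
  hSq_comp_id : ∀ {a b c d} {t : Hor a b} {l : Ver a c} {r : Ver b d} {bo : Hor c d}
    (α : Sq t l r bo), HEq (hSq α (hIdSq r)) α
  hSq_assoc : ∀ {a b c d a' b' c' d' : Obj} {t1 : Hor a b} {t2 : Hor b c} {t3 : Hor c d}
    {l : Ver a a'} {m1 : Ver b b'} {m2 : Ver c c'} {r : Ver d d'}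
    {b1 : Hor a' b'} {b2 : Hor b' c'} {b3 : Hor c' d'}
    (α : Sq t1 l m1 b1) (β : Sq t2 m1 m2 b2) (γ : Sq t3 m2 r b3),
    HEq (hSq (hSq α β) γ) (hSq α (hSq β γ))
  interchange : ∀ {a b c a' b' c' a'' b'' c'' : Obj}
    {t1 : Hor a b} {t2 : Hor b c} {l : Ver a a'} {m : Ver b b'} {r : Ver c c'}
    {b1 : Hor a' b'} {b2 : Hor b' c'}
    {l' : Ver a' a''} {m' : Ver b' b''} {r' : Ver c' c''}
    {c1 : Hor a'' b''} {c2 : Hor b'' c''}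
    (α : Sq t1 l m b1) (γ : Sq t2 m r b2) (β : Sq b1 l' m' c1) (δ : Sq b2 m' r' c2),
    hSq (vSq α β) (vSq γ δ) = vSq (hSq α γ) (hSq β δ)
  vIdSq_hId : ∀ a, vIdSq (hId a) = hIdSq (vId a)
  vIdSq_hComp : ∀ {a b c} (g : Hor a b) (h : Hor b c),
    vIdSq (hComp g h) = hSq (vIdSq g) (vIdSq h)
  hIdSq_vComp : ∀ {a b c} (u : Ver a b) (v : Ver b c),
    hIdSq (vComp u v) = vSq (hIdSq u) (hIdSq v)

namespace DblCat

variable (X : DblCat.{u})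

/-- A square `κ` (with top `g`, left `l`, right `u`, bottom `bo`) is opcartesian
(with respect to the codomain functor `d₀ : X₁ → X₀`). -/
def Opcart {a b bh c : X.Obj} {g : X.Hor a b} {l : X.Ver a bh} {u : X.Ver b c}
    {bo : X.Hor bh c} (κ : X.Sq g l u bo) : Prop :=
  ∀ {d e : X.Obj} (w : X.Ver a d) (v : X.Ver c e) (h : X.Hor d e)
    (α : X.Sq g w (X.vComp u v) h),
    ∃! p : Σ' θ : X.Ver bh d, X.Sq bo θ v h,
      X.vComp l p.1 = w ∧ HEq (X.vSq κ p.2) α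

/-- A crossed double category: every top-right corner has an opcartesian filler,
horizontal identity squares are opcartesian, and opcartesian squares are closed under
horizontal composition. -/
def Crossed : Prop :=
  (∀ {a b c : X.Obj} (g : X.Hor a b) (u : X.Ver b c),
      ∃ (bh : X.Obj) (l : X.Ver a bh) (bo : X.Hor bh c) (κ : X.Sq g l u bo), X.Opcart κ) ∧
  (∀ {a b : X.Obj} (u : X.Ver a b), X.Opcart (X.hIdSq u)) ∧
  (∀ {a b c a' b' c' : X.Obj} {t1 : X.Hor a b} {t2 : X.Hor b c} {l : X.Ver a a'}
      {m : X.Ver b b'} {r : X.Ver c c'} {b1 : X.Hor a' b'} {b2 : X.Hor b' c'}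
      (κ1 : X.Sq t1 l m b1) (κ2 : X.Sq t2 m r b2),
      X.Opcart κ1 → X.Opcart κ2 → X.Opcart (X.hSq κ1 κ2))

/-- Opcartesian in `X* = ((Xᵛ)ʰ)ᵀ`, expressed elementarily in `X`. -/
def Opcart2 {a b bh c : X.Obj} {g : X.Hor a b} {l : X.Ver a bh} {u : X.Ver b c}
    {bo : X.Hor bh c} (κ : X.Sq g l u bo) : Prop :=
  ∀ {e : X.Obj} (w : X.Ver a e) (k : X.Hor e c) (α : X.Sq g w u k),
    ∃! p : Σ' ψ : X.Hor e bh, X.Sq (X.hId a) w l ψ,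
      HEq (X.hSq p.2 κ) α

/-- Bicartesian squares: opcartesian in both `X` and `X*`. -/
def Bicart {a b bh c : X.Obj} {g : X.Hor a b} {l : X.Ver a bh} {u : X.Ver b c}
    {bo : X.Hor bh c} (κ : X.Sq g l u bo) : Prop :=
  X.Opcart κ ∧ X.Opcart2 κ

/-- Top-right bicrossed double category. -/
def TopRightBicrossed : Prop :=
  (∀ {a b c : X.Obj} (g : X.Hor a b) (u : X.Ver b c),
      ∃ (bh : X.Obj) (l : X.Ver a bh) (bo : X.Hor bh c) (κ : X.Sq g l u bo), X.Bicart κ) ∧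
  (∀ {a b : X.Obj} (u : X.Ver a b), X.Bicart (X.hIdSq u)) ∧
  (∀ {a b : X.Obj} (g : X.Hor a b), X.Bicart (X.vIdSq g)) ∧
  (∀ {a b c a' b' c' : X.Obj} {t1 : X.Hor a b} {t2 : X.Hor b c} {l : X.Ver a a'}
      {m : X.Ver b b'} {r : X.Ver c c'} {b1 : X.Hor a' b'} {b2 : X.Hor b' c'}
      (κ1 : X.Sq t1 l m b1) (κ2 : X.Sq t2 m r b2),
      X.Bicart κ1 → X.Bicart κ2 → X.Bicart (X.hSq κ1 κ2)) ∧
  (∀ {a b c d e f : X.Obj} {t : X.Hor a b} {l : X.Ver a c} {r : X.Ver b d} {m : X.Hor c d}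
      {l' : X.Ver c e} {r' : X.Ver d f} {bo : X.Hor e f}
      (κ1 : X.Sq t l r m) (κ2 : X.Sq m l' r' bo),
      X.Bicart κ1 → X.Bicart κ2 → X.Bicart (X.vSq κ1 κ2))

/-- Codomain-discrete double category: every top-right corner fills into a unique square. -/
def CodDiscrete : Prop :=
  ∀ {a b c : X.Obj} (g : X.Hor a b) (u : X.Ver b c),
    ∃! p : Σ' (bh : X.Obj) (l : X.Ver a bh) (bo : X.Hor bh c), X.Sq g l u bo, True

/-- Every top-right corner can be filled into (at least) one square. -/
def CornerFill : Prop :=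
  ∀ {a b c : X.Obj} (g : X.Hor a b) (u : X.Ver b c),
    ∃ (bh : X.Obj) (l : X.Ver a bh) (bo : X.Hor bh c), Nonempty (X.Sq g l u bo)

def AllOpcart : Prop :=
  ∀ {a b c d : X.Obj} {t : X.Hor a b} {l : X.Ver a c} {r : X.Ver b d} {bo : X.Hor c d}
    (κ : X.Sq t l r bo), X.Opcart κ

def AllBicart : Prop :=
  ∀ {a b c d : X.Obj} {t : X.Hor a b} {l : X.Ver a c} {r : X.Ver b d} {bo : X.Hor c d}
    (κ : X.Sq t l r bo), X.Bicart κ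

def HIso {a b : X.Obj} (g : X.Hor a b) : Prop :=
  ∃ g' : X.Hor b a, X.hComp g g' = X.hId a ∧ X.hComp g' g = X.hId b

def VIso {a b : X.Obj} (u : X.Ver a b) : Prop :=
  ∃ u' : X.Ver b a, X.vComp u u' = X.vId a ∧ X.vComp u' u = X.vId b

/-- Strict horizontal invariance. -/
def HorInvariant : Prop :=
  ∀ {a b c d : X.Obj} (g : X.Hor a b) (h : X.Hor c d) (u : X.Ver b d),
    X.HIso g → X.HIso h → ∃! _p : Σ' w : X.Ver a c, X.Sq g w u h, True

/-- Strict vertical invariance. -/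
def VerInvariant : Prop :=
  ∀ {a b c d : X.Obj} (g : X.Hor a b) (u : X.Ver a c) (v : X.Ver b d),
    X.VIso u → X.VIso v → ∃! _p : Σ' h : X.Hor c d, X.Sq g u v h, True

def Invariant : Prop := X.HorInvariant ∧ X.VerInvariant

/-- The top-left corner `(π₁, π₂)` of the vertical dual `Xᵛ`, expressed in `X`
(`π₁ : a → a'` vertical in `X`, `π₂ : a' → b` horizontal), is jointly monic. -/
def JMonicVDual {a a' b : X.Obj} (π₁ : X.Ver a a') (π₂ : X.Hor a' b) : Prop :=
  ∀ {a'' : X.Obj} (θ θ' : X.Ver a' a'') (ψ ψ' : X.Hor a'' a')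
    (_κ1 : X.Sq (X.hId a') θ (X.vId a') ψ) (_κ2 : X.Sq (X.hId a') θ' (X.vId a') ψ'),
    X.vComp π₁ θ = X.vComp π₁ θ' → X.hComp ψ π₂ = X.hComp ψ' π₂ → θ = θ' ∧ ψ = ψ'

/-- Factorization double category. -/
def IsFactDbl : Prop :=
  X.Invariant ∧ X.CornerFill ∧ X.AllBicart ∧
  (∀ {a a' b : X.Obj} (π₁ : X.Ver a a') (π₂ : X.Hor a' b), X.JMonicVDual π₁ π₂)

/-- A corner from `a` to `b`: a vertical morphism followed by a horizontal one. -/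
structure Corner (a b : X.Obj) : Type u where
  mid : X.Obj
  v : X.Ver a mid
  h : X.Hor mid b

/-- A 2-cell between corners. -/
def CellRel {a b : X.Obj} (c1 c2 : X.Corner a b) : Prop :=
  ∃ (θ : X.Ver c1.mid c2.mid) (_β : X.Sq c1.h θ (X.vId b) c2.h), X.vComp c1.v θ = c2.v

/-- Morphisms of the category of corners: corners modulo zigzags of 2-cells. -/
def CnrHom (a b : X.Obj) : Type u := Quot (fun c1 c2 : X.Corner a b => X.CellRel c1 c2)

def mkCnr {a b : X.Obj} (c : X.Corner a b) : X.CnrHom a b := Quot.mk _ c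

/-- The vertical corner `[u, 1]`. -/
def mkE {a b : X.Obj} (u : X.Ver a b) : X.CnrHom a b := X.mkCnr ⟨b, u, X.hId b⟩

/-- The horizontal corner `[1, g]`. -/
def mkM {a b : X.Obj} (g : X.Hor a b) : X.CnrHom a b := X.mkCnr ⟨a, X.vId a, g⟩

/-- The identity corner `[1ₐ, 1ₐ]`. -/
def cnrId (a : X.Obj) : X.CnrHom a a := X.mkCnr ⟨a, X.vId a, X.hId a⟩

/-- A composition operation on corners which is computed by filling the middle
corner with (any) opcartesian square. -/
structure CnrStruct (X : DblCat.{u}) where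
  comp : ∀ {a b c : X.Obj}, X.CnrHom a b → X.CnrHom b c → X.CnrHom a c
  compat : ∀ {a m1 b m2 c bh : X.Obj} (u : X.Ver a m1) (g : X.Hor m1 b)
    (v : X.Ver b m2) (h : X.Hor m2 c)
    (w : X.Ver m1 bh) (bo : X.Hor bh m2) (κ : X.Sq g w v bo), X.Opcart κ →
    comp (X.mkCnr ⟨m1, u, g⟩) (X.mkCnr ⟨m2, v, h⟩) =
      X.mkCnr ⟨bh, X.vComp u w, X.hComp bo h⟩

/-- The category of corners: a corner composition which is unital and associative. -/
structure CnrCat (X : DblCat.{u}) extends CnrStruct X where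
  id_comp : ∀ {a b : X.Obj} (f : X.CnrHom a b), comp (X.cnrId a) f = f
  comp_id : ∀ {a b : X.Obj} (f : X.CnrHom a b), comp f (X.cnrId b) = f
  assoc : ∀ {a b c d : X.Obj} (f : X.CnrHom a b) (g : X.CnrHom b c) (h : X.CnrHom c d),
    comp (comp f g) h = comp f (comp g h)

/-- The class `E_X` of vertical corners. -/
def InE {a b : X.Obj} (f : X.CnrHom a b) : Prop := ∃ u : X.Ver a b, f = X.mkE u

/-- The class `M_X` of horizontal corners. -/
def InM {a b : X.Obj} (f : X.CnrHom a b) : Prop := ∃ g : X.Hor a b, f = X.mkM g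

/-- Isomorphisms in the category of corners. -/
def CnrIso (c : CnrStruct X) {a b : X.Obj} (f : X.CnrHom a b) : Prop :=
  ∃ g : X.CnrHom b a, c.comp f g = X.cnrId a ∧ c.comp g f = X.cnrId b

end DblCat

end Paper

namespace Paper

namespace DblCat

variable {X : DblCat.{u}}

/-- Cast a square along an equality of its right vertical boundary. -/
def castSq {a b c d : X.Obj} {t : X.Hor a b} {l : X.Ver a c} {r r' : X.Ver b d}
    {bo : X.Hor c d} (h : r = r') (α : X.Sq t l r bo) : X.Sq t l r' bo := h ▸ α

theorem heq_castSq {a b c d : X.Obj} {t : X.Hor a b} {l : X.Ver a c} {r r' : X.Ver b d}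
    {bo : X.Hor c d} (h : r = r') (α : X.Sq t l r bo) : HEq (castSq h α) α := by
  subst h; rfl

theorem vSq_congr {a b c d e f : X.Obj} {t : X.Hor a b} {l : X.Ver a c} {r : X.Ver b d}
    {m : X.Hor c d} {l1 l2 : X.Ver c e} {r' : X.Ver d f} {bo : X.Hor e f}
    (κ : X.Sq t l r m) {β : X.Sq m l1 r' bo} {β' : X.Sq m l2 r' bo}
    (hl : l1 = l2) (hβ : HEq β β') : HEq (X.vSq κ β) (X.vSq κ β') := by
  subst hl; rw [eq_of_heq hβ]

theorem psig_eq {bh c d e : X.Obj} {bo : X.Hor bh c} {v : X.Ver c e} {h : X.Hor d e}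
    {θ θ' : X.Ver bh d} {β : X.Sq bo θ v h} {β' : X.Sq bo θ' v h}
    (h1 : θ = θ') (h2 : HEq β β') :
    (⟨θ, β⟩ : Σ' θ : X.Ver bh d, X.Sq bo θ v h) = ⟨θ', β'⟩ := by
  subst h1; rw [eq_of_heq h2]

/-- Vertical identity squares are always opcartesian. -/
theorem opcart_vIdSq {a b : X.Obj} (g : X.Hor a b) : X.Opcart (X.vIdSq g) := by
  intro d e w v h α
  refine ⟨⟨w, castSq (X.vId_comp v) α⟩, ⟨X.vId_comp w, ?_⟩, ?_⟩
  · exact (X.vSq_id_comp _).trans (heq_castSq _ _)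
  · rintro ⟨θ, β⟩ ⟨hθ, hβ⟩
    refine psig_eq (by rw [← hθ, X.vId_comp]) ?_
    exact ((X.vSq_id_comp β).symm.trans hβ).trans (heq_castSq _ _).symm

/-- Vertical composites of opcartesian squares are opcartesian. -/
theorem opcart_vSq {a b c d e f : X.Obj} {t : X.Hor a b} {l : X.Ver a c} {r : X.Ver b d}
    {m : X.Hor c d} {l' : X.Ver c e} {r' : X.Ver d f} {bo : X.Hor e f}
    {κ1 : X.Sq t l r m} {κ2 : X.Sq m l' r' bo}
    (h1 : X.Opcart κ1) (h2 : X.Opcart κ2) : X.Opcart (X.vSq κ1 κ2) := by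
  intro dd ee w v h α
  obtain ⟨p1, ⟨hp1a, hp1b⟩, hu1⟩ := h1 w (X.vComp r' v) h (castSq (X.vAssoc r r' v) α)
  obtain ⟨p2, ⟨hp2a, hp2b⟩, hu2⟩ := h2 p1.1 v h p1.2
  refine ⟨p2, ⟨?_, ?_⟩, ?_⟩
  · rw [X.vAssoc, hp2a, hp1a]
  · exact (X.vSq_assoc κ1 κ2 p2.2).trans
      (((vSq_congr κ1 hp2a hp2b).trans hp1b).trans (heq_castSq _ _))
  · rintro ⟨θ, β⟩ ⟨hθ, hβ⟩
    have hq1 : (⟨X.vComp l' θ, X.vSq κ2 β⟩ :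
        Σ' θ1 : X.Ver c dd, X.Sq m θ1 (X.vComp r' v) h) = p1 := by
      refine hu1 _ ⟨by rw [← X.vAssoc]; exact hθ, ?_⟩
      exact ((X.vSq_assoc κ1 κ2 β).symm.trans hβ).trans (heq_castSq _ _).symm
    have hfst : X.vComp l' θ = p1.1 := by rw [← hq1]
    have hsnd : HEq (X.vSq κ2 β) p1.2 := by rw [← hq1]
    exact hu2 ⟨θ, β⟩ ⟨hfst, hsnd⟩

/-- Master comparison lemma: composing corners using any opcartesian filler on one side
and an arbitrary filler on the other, where the two factor corners are related by
2-cells, produces 2-cell–related results. -/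
theorem master {a b c m1 m1' m2 m2' bh bh' : X.Obj}
    (u : X.Ver a m1) (g : X.Hor m1 b) (v : X.Ver b m2) (h : X.Hor m2 c)
    (u' : X.Ver a m1') (g' : X.Hor m1' b) (v' : X.Ver b m2') (h' : X.Hor m2' c)
    (θh : X.Ver m1 m1') (βh : X.Sq g θh (X.vId b) g') (hu : X.vComp u θh = u')
    (θv : X.Ver m2 m2') (βv : X.Sq h θv (X.vId c) h') (hv : X.vComp v θv = v')
    (w : X.Ver m1 bh) (bo : X.Hor bh m2) (κ : X.Sq g w v bo) (hκ : X.Opcart κ)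
    (w' : X.Ver m1' bh') (bo' : X.Hor bh' m2') (κ' : X.Sq g' w' v' bo') :
    X.CellRel ⟨bh, X.vComp u w, X.hComp bo h⟩ ⟨bh', X.vComp u' w', X.hComp bo' h'⟩ := by
  have e1 : X.vComp (X.vId b) v' = X.vComp v θv := by rw [X.vId_comp, hv]
  obtain ⟨p, ⟨hpa, -⟩, -⟩ := hκ (X.vComp θh w') θv bo' (castSq e1 (X.vSq βh κ'))
  exact ⟨p.1, X.hSq p.2 βv, by rw [X.vAssoc, hpa, ← X.vAssoc, hu]⟩

/-- A choice of opcartesian filler for every top-right corner. -/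
noncomputable def fillSq (hX : X.Crossed) {a b c : X.Obj} (g : X.Hor a b) (u : X.Ver b c) :
    Σ' (bh : X.Obj) (l : X.Ver a bh) (bo : X.Hor bh c) (κ : X.Sq g l u bo), X.Opcart κ :=
  Classical.choice <| by
    obtain ⟨bh, l, bo, κ, hκ⟩ := hX.1 g u
    exact ⟨⟨bh, l, bo, κ, hκ⟩⟩

/-- Composition of corner representatives using the chosen fillers. -/
noncomputable def compC (hX : X.Crossed) {a b c : X.Obj}
    (c1 : X.Corner a b) (c2 : X.Corner b c) : X.CnrHom a c :=
  X.mkCnr ⟨(fillSq hX c1.h c2.v).1, X.vComp c1.v (fillSq hX c1.h c2.v).2.1,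
    X.hComp (fillSq hX c1.h c2.v).2.2.1 c2.h⟩

theorem compC_eq (hX : X.Crossed) {a m1 b m2 c bh : X.Obj} (u : X.Ver a m1) (g : X.Hor m1 b)
    (v : X.Ver b m2) (h : X.Hor m2 c) (w : X.Ver m1 bh) (bo : X.Hor bh m2)
    (κ : X.Sq g w v bo) (_hκ : X.Opcart κ) :
    compC hX ⟨m1, u, g⟩ ⟨m2, v, h⟩ = X.mkCnr ⟨bh, X.vComp u w, X.hComp bo h⟩ :=
  Quot.sound (master u g v h u g v h (X.vId m1) (X.vIdSq g) (X.vComp_id u)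
    (X.vId m2) (X.vIdSq h) (X.vComp_id v) (fillSq hX g v).2.1 (fillSq hX g v).2.2.1
    (fillSq hX g v).2.2.2.1 (fillSq hX g v).2.2.2.2 w bo κ)

theorem compC_congr_left (hX : X.Crossed) {a b c : X.Obj} {c1 c1' : X.Corner a b}
    (c2 : X.Corner b c) (hr : X.CellRel c1 c1') : compC hX c1 c2 = compC hX c1' c2 := by
  obtain ⟨m1, u, g⟩ := c1; obtain ⟨m1', u', g'⟩ := c1'; obtain ⟨m2, v, h⟩ := c2
  obtain ⟨θ, β, hθ⟩ := hr
  refine ((compC_eq hX u g v h _ _ (fillSq hX g v).2.2.2.1 (fillSq hX g v).2.2.2.2).trans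
    ?_).trans (compC_eq hX u' g' v h _ _ (fillSq hX g' v).2.2.2.1
      (fillSq hX g' v).2.2.2.2).symm
  exact Quot.sound (master u g v h u' g' v h θ β hθ (X.vId m2) (X.vIdSq h) (X.vComp_id v)
    (fillSq hX g v).2.1 (fillSq hX g v).2.2.1 (fillSq hX g v).2.2.2.1
    (fillSq hX g v).2.2.2.2 (fillSq hX g' v).2.1 (fillSq hX g' v).2.2.1
    (fillSq hX g' v).2.2.2.1)

theorem compC_congr_right (hX : X.Crossed) {a b c : X.Obj} (c1 : X.Corner a b)
    {c2 c2' : X.Corner b c} (hr : X.CellRel c2 c2') : compC hX c1 c2 = compC hX c1 c2' := by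
  obtain ⟨m1, u, g⟩ := c1; obtain ⟨m2, v, h⟩ := c2; obtain ⟨m2', v', h'⟩ := c2'
  obtain ⟨θ, β, hθ⟩ := hr
  refine ((compC_eq hX u g v h _ _ (fillSq hX g v).2.2.2.1 (fillSq hX g v).2.2.2.2).trans
    ?_).trans (compC_eq hX u g v' h' _ _ (fillSq hX g v').2.2.2.1
      (fillSq hX g v').2.2.2.2).symm
  exact Quot.sound (master u g v h u g v' h' (X.vId m1) (X.vIdSq g) (X.vComp_id u)
    θ β hθ (fillSq hX g v).2.1 (fillSq hX g v).2.2.1 (fillSq hX g v).2.2.2.1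
    (fillSq hX g v).2.2.2.2 (fillSq hX g v').2.1 (fillSq hX g v').2.2.1
    (fillSq hX g v').2.2.2.1)

/-- Composition of corner classes. -/
noncomputable def compQ (hX : X.Crossed) {a b c : X.Obj}
    (f : X.CnrHom a b) (g : X.CnrHom b c) : X.CnrHom a c :=
  Quot.lift₂ (compC hX) (fun c1 _ _ hr => compC_congr_right hX c1 hr)
    (fun _ _ c2 hr => compC_congr_left hX c2 hr) f g

theorem compQ_eq (hX : X.Crossed) {a m1 b m2 c bh : X.Obj} (u : X.Ver a m1) (g : X.Hor m1 b)
    (v : X.Ver b m2) (h : X.Hor m2 c) (w : X.Ver m1 bh) (bo : X.Hor bh m2)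
    (κ : X.Sq g w v bo) (hκ : X.Opcart κ) :
    compQ hX (X.mkCnr ⟨m1, u, g⟩) (X.mkCnr ⟨m2, v, h⟩) =
      X.mkCnr ⟨bh, X.vComp u w, X.hComp bo h⟩ :=
  compC_eq hX u g v h w bo κ hκ

end DblCat

open DblCat in
/-- For a crossed double category `X`, the category of corners is a
well-defined category: there is a composition of (equivalence classes of) corners,
independent of the choice of opcartesian filler squares, which is associative and
unital with identities `[1ₐ, 1ₐ]`. -/
theorem statement0 (X : DblCat.{u}) (hX : X.Crossed) : Nonempty (CnrCat X) := by
  refine ⟨⟨⟨compQ hX, fun u g v h w bo κ hκ => compQ_eq hX u g v h w bo κ hκ⟩, ?_, ?_, ?_⟩⟩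
  · -- id_comp
    intro a b f
    induction f using Quot.ind with
    | mk c =>
      obtain ⟨m, v, h⟩ := c
      show compQ hX (X.mkCnr ⟨a, X.vId a, X.hId a⟩) (X.mkCnr ⟨m, v, h⟩) = X.mkCnr ⟨m, v, h⟩
      rw [compQ_eq hX (X.vId a) (X.hId a) v h v (X.hId m) (X.hIdSq v) (hX.2.1 v),
        X.vId_comp, X.hId_comp]
  · -- comp_id
    intro a b f
    induction f using Quot.ind with
    | mk c =>
      obtain ⟨m, v, h⟩ := c
      show compQ hX (X.mkCnr ⟨m, v, h⟩) (X.mkCnr ⟨b, X.vId b, X.hId b⟩) = X.mkCnr ⟨m, v, h⟩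
      rw [compQ_eq hX v h (X.vId b) (X.hId b) (X.vId m) h (X.vIdSq h) (opcart_vIdSq h),
        X.vComp_id, X.hComp_id]
  · -- assoc
    intro a b c d f g h
    induction f using Quot.ind with
    | mk cf =>
      induction g using Quot.ind with
      | mk cg =>
        induction h using Quot.ind with
        | mk ch =>
          obtain ⟨a1, v1, g1⟩ := cf
          obtain ⟨b1, v2, g2⟩ := cg
          obtain ⟨c1, v3, g3⟩ := ch
          obtain ⟨p1, w1, bo1, κ1, hκ1⟩ := hX.1 g1 v2
          obtain ⟨p2, w2, bo2, κ2, hκ2⟩ := hX.1 g2 v3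
          obtain ⟨p3, w3, bo3, κ3, hκ3⟩ := hX.1 bo1 w2
          show compQ hX (compQ hX (X.mkCnr ⟨a1, v1, g1⟩) (X.mkCnr ⟨b1, v2, g2⟩))
              (X.mkCnr ⟨c1, v3, g3⟩) =
            compQ hX (X.mkCnr ⟨a1, v1, g1⟩)
              (compQ hX (X.mkCnr ⟨b1, v2, g2⟩) (X.mkCnr ⟨c1, v3, g3⟩))
          rw [compQ_eq hX v1 g1 v2 g2 w1 bo1 κ1 hκ1,
            compQ_eq hX v2 g2 v3 g3 w2 bo2 κ2 hκ2,
            compQ_eq hX (X.vComp v1 w1) (X.hComp bo1 g2) v3 g3 w3 (X.hComp bo3 bo2)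
              (X.hSq κ3 κ2) (hX.2.2 κ3 κ2 hκ3 hκ2),
            compQ_eq hX v1 g1 (X.vComp v2 w2) (X.hComp bo2 g3) (X.vComp w1 w3) bo3
              (X.vSq κ1 κ3) (opcart_vSq hκ1 hκ3),
            X.vAssoc, X.hAssoc]

end Paper
end

section
/- For a category C with pullbacks, the two canonical classes of morphisms in the category Span(C) — spans whose forward leg is an identity, and spans whose backward leg is an identity — form a weak factorization system on Span(C) (each class is closed under the relevant retracts, every morphism factors, and the classes are mutually weakly orthogonal). -/
open CategoryTheory

universe u v

namespace Paper

/-- A span from `a` to `b` in `C`. -/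
structure SpanCorner (C : Type u) [Category.{v} C] (a b : C) : Type (max u v) where
  mid : C
  l : mid ⟶ a
  r : mid ⟶ b

/-- Isomorphism of spans. -/
def SpanRel (C : Type u) [Category.{v} C] {a b : C} (s t : SpanCorner C a b) : Prop :=
  ∃ e : s.mid ≅ t.mid, e.hom ≫ t.l = s.l ∧ e.hom ≫ t.r = s.r

/-- Morphisms of the span category: isomorphism classes of spans. -/
def SpanHom (C : Type u) [Category.{v} C] (a b : C) : Type (max u v) :=
  Quot (fun s t : SpanCorner C a b => SpanRel C s t)

def mkSpan {C : Type u} [Category.{v} C] {a b : C} (mid : C) (l : mid ⟶ a) (r : mid ⟶ b) :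
    SpanHom C a b :=
  Quot.mk _ ⟨mid, l, r⟩

/-- The category `Span C`: a composition of classes of spans, computed by (any)
pullback, which is unital and associative. -/
structure SpanCat (C : Type u) [Category.{v} C] where
  comp : ∀ {a b c : C}, SpanHom C a b → SpanHom C b c → SpanHom C a c
  compat : ∀ {a b c : C} (s : SpanCorner C a b) (t : SpanCorner C b c)
    (P : C) (p1 : P ⟶ s.mid) (p2 : P ⟶ t.mid),
    IsPullback p1 p2 s.r t.l →
    comp (Quot.mk _ s) (Quot.mk _ t) = mkSpan P (p1 ≫ s.l) (p2 ≫ t.r)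
  id_comp : ∀ {a b : C} (f : SpanHom C a b), comp (mkSpan a (𝟙 a) (𝟙 a)) f = f
  comp_id : ∀ {a b : C} (f : SpanHom C a b), comp f (mkSpan b (𝟙 b) (𝟙 b)) = f
  assoc : ∀ {a b c d : C} (f : SpanHom C a b) (g : SpanHom C b c) (h : SpanHom C c d),
    comp (comp f g) h = comp f (comp g h)

/-- The class of spans with identity forward leg. -/
def SpanInE {C : Type u} [Category.{v} C] {a b : C} (f : SpanHom C a b) : Prop :=
  ∃ u : b ⟶ a, f = mkSpan b u (𝟙 b)

/-- The class of spans with identity backward leg. -/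
def SpanInM {C : Type u} [Category.{v} C] {a b : C} (f : SpanHom C a b) : Prop :=
  ∃ g : a ⟶ b, f = mkSpan a (𝟙 a) g

/-- Left lifting property against all maps in `M`. -/
def SpanLLP {C : Type u} [Category.{v} C] (S : SpanCat C)
    (M : ∀ {x y : C}, SpanHom C x y → Prop) {a b : C} (f : SpanHom C a b) : Prop :=
  ∀ {x y : C} (m : SpanHom C x y), M m →
    ∀ (u : SpanHom C a x) (v : SpanHom C b y), S.comp f v = S.comp u m →
      ∃ d : SpanHom C b x, S.comp f d = u ∧ S.comp d m = v

/-- Right lifting property against all maps in `E`. -/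
def SpanRLP {C : Type u} [Category.{v} C] (S : SpanCat C)
    (E : ∀ {x y : C}, SpanHom C x y → Prop) {x y : C} (m : SpanHom C x y) : Prop :=
  ∀ {a b : C} (f : SpanHom C a b), E f →
    ∀ (u : SpanHom C a x) (v : SpanHom C b y), S.comp f v = S.comp u m →
      ∃ d : SpanHom C b x, S.comp f d = u ∧ S.comp d m = v

end Paper

/-!
Composing with a span of the form `(u, 1)` on the left, or `(1, g)` on the right, only
involves pullbacks along identities, so every square in the lifting problems can be computed
explicitly. A square from `(u, 1)` to `(1, g)` then has an evident diagonal. Conversely, if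
`(l, r)` lifts against the `M`-part of its own factorization `(l, 1) ; (1, r)`, the lift is of the
form `(1, k)` with `k ≫ r = 1` and `r ≫ k` invertible, so `r` is an isomorphism and
`(l, r) = (r⁻¹ ≫ l, 1)`; the class `M` is treated dually.
-/

namespace Paper

section

variable {C : Type u} [Category.{v} C]

theorem isIso_of_comp_eq_id_of_isIso_comp {X Y : C} {r : X ⟶ Y} {k : Y ⟶ X}
    (hk : k ≫ r = 𝟙 Y) [IsIso (r ≫ k)] : IsIso r :=
  have : Mono r := mono_of_mono r k
  have : IsSplitEpi r := IsSplitEpi.mk' ⟨k, hk⟩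
  isIso_of_mono_of_isSplitEpi r

theorem spanRel_equivalence (a b : C) : _root_.Equivalence (SpanRel C (a := a) (b := b)) where
  refl _ := ⟨Iso.refl _, by simp, by simp⟩
  symm := by
    rintro s t ⟨e, hl, hr⟩
    exact ⟨e.symm, by simp [← hl], by simp [← hr]⟩
  trans := by
    rintro s t w ⟨e, hl, hr⟩ ⟨e', hl', hr'⟩
    exact ⟨e ≪≫ e', by simp [hl', hl], by simp [hr', hr]⟩

theorem exists_eq_mkSpan {a b : C} (f : SpanHom C a b) :
    ∃ (P : C) (l : P ⟶ a) (r : P ⟶ b), f = mkSpan P l r := by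
  obtain ⟨⟨P, l, r⟩, rfl⟩ := Quot.exists_rep f
  exact ⟨P, l, r, rfl⟩

theorem mkSpan_eq_mkSpan_iff {a b P Q : C} {l : P ⟶ a} {r : P ⟶ b} {l' : Q ⟶ a}
    {r' : Q ⟶ b} :
    mkSpan P l r = mkSpan Q l' r' ↔ ∃ e : P ≅ Q, e.hom ≫ l' = l ∧ e.hom ≫ r' = r :=
  ⟨fun h => (spanRel_equivalence a b).eqvGen_iff.mp (Quot.eq.mp h), fun h => Quot.sound h⟩

theorem spanInE_mkSpan_iff {a b P : C} {l : P ⟶ a} {r : P ⟶ b} :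
    SpanInE (mkSpan P l r) ↔ IsIso r := by
  constructor
  · rintro ⟨u, h⟩
    obtain ⟨e, -, he⟩ := mkSpan_eq_mkSpan_iff.mp h
    rw [← he, Category.comp_id]
    infer_instance
  · intro
    exact ⟨inv r ≫ l, Quot.sound ⟨asIso r, by simp, by simp⟩⟩

theorem spanInM_mkSpan_iff {a b P : C} {l : P ⟶ a} {r : P ⟶ b} :
    SpanInM (mkSpan P l r) ↔ IsIso l := by
  constructor
  · rintro ⟨g, h⟩
    obtain ⟨e, he, -⟩ := mkSpan_eq_mkSpan_iff.mp h
    rw [← he, Category.comp_id]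
    infer_instance
  · intro
    exact ⟨inv l ≫ r, Quot.sound ⟨asIso l, by simp, by simp⟩⟩

namespace SpanCat

variable (S : SpanCat C)

theorem mkSpan_id_right_comp {a b c P : C} (u : b ⟶ a) (l : P ⟶ b) (r : P ⟶ c) :
    S.comp (mkSpan b u (𝟙 b)) (mkSpan P l r) = mkSpan P (l ≫ u) r := by
  refine (S.compat ⟨b, u, 𝟙 b⟩ ⟨P, l, r⟩ P l (𝟙 P) (.of_vert_isIso ⟨by simp⟩)).trans ?_
  rw [Category.id_comp]

theorem comp_mkSpan_id_left {a b c P : C} (l : P ⟶ a) (r : P ⟶ b) (g : b ⟶ c) :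
    S.comp (mkSpan P l r) (mkSpan b (𝟙 b) g) = mkSpan P l (r ≫ g) := by
  refine (S.compat ⟨P, l, r⟩ ⟨b, 𝟙 b, g⟩ P (𝟙 P) r (.of_horiz_isIso ⟨by simp⟩)).trans ?_
  rw [Category.id_comp]

theorem exists_factorization {a b : C} (f : SpanHom C a b) :
    ∃ (x : C) (e : SpanHom C a x) (m : SpanHom C x b),
      SpanInE e ∧ SpanInM m ∧ S.comp e m = f := by
  obtain ⟨P, l, r, rfl⟩ := exists_eq_mkSpan f
  refine ⟨P, mkSpan P l (𝟙 P), mkSpan P (𝟙 P) r, ⟨l, rfl⟩, ⟨r, rfl⟩, ?_⟩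
  rw [mkSpan_id_right_comp, Category.id_comp]

theorem exists_lift {a b x y : C} (u : b ⟶ a) (g : x ⟶ y) (p : SpanHom C a x)
    (q : SpanHom C b y) (h : S.comp (mkSpan b u (𝟙 b)) q = S.comp p (mkSpan x (𝟙 x) g)) :
    ∃ d : SpanHom C b x,
      S.comp (mkSpan b u (𝟙 b)) d = p ∧ S.comp d (mkSpan x (𝟙 x) g) = q := by
  obtain ⟨P, pl, pr, rfl⟩ := exists_eq_mkSpan p
  obtain ⟨Q, ql, qr, rfl⟩ := exists_eq_mkSpan q
  rw [mkSpan_id_right_comp, comp_mkSpan_id_left] at h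
  obtain ⟨e, hl, hr⟩ := mkSpan_eq_mkSpan_iff.mp h
  refine ⟨mkSpan Q ql (e.hom ≫ pr), ?_, ?_⟩
  · rw [mkSpan_id_right_comp]
    exact Quot.sound ⟨e, hl, rfl⟩
  · rw [comp_mkSpan_id_left, Category.assoc, hr]

theorem exists_eq_of_mkSpan_id_right_comp_eq {a b c : C} {u : b ⟶ a} {w : c ⟶ a}
    {d : SpanHom C b c} (h : S.comp (mkSpan b u (𝟙 b)) d = mkSpan c w (𝟙 c)) :
    ∃ k : c ⟶ b, d = mkSpan c k (𝟙 c) ∧ k ≫ u = w := by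
  obtain ⟨Q, l, r, rfl⟩ := exists_eq_mkSpan d
  rw [mkSpan_id_right_comp] at h
  obtain ⟨e, hl, hr⟩ := mkSpan_eq_mkSpan_iff.mp h
  refine ⟨e.inv ≫ l, Quot.sound ⟨e, by simp, hr⟩, ?_⟩
  rw [Category.assoc, ← hl, Iso.inv_hom_id_assoc]

theorem exists_eq_of_comp_mkSpan_id_left_eq {a b c : C} {g : b ⟶ c} {w : a ⟶ c}
    {d : SpanHom C a b} (h : S.comp d (mkSpan b (𝟙 b) g) = mkSpan a (𝟙 a) w) :
    ∃ k : a ⟶ b, d = mkSpan a (𝟙 a) k ∧ k ≫ g = w := by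
  obtain ⟨Q, l, r, rfl⟩ := exists_eq_mkSpan d
  rw [comp_mkSpan_id_left] at h
  obtain ⟨e, hl, hr⟩ := mkSpan_eq_mkSpan_iff.mp h
  refine ⟨e.inv ≫ r, Quot.sound ⟨e, hl, by simp⟩, ?_⟩
  rw [Category.assoc, ← hr, Iso.inv_hom_id_assoc]

theorem spanInE_of_spanLLP {a b : C} {f : SpanHom C a b}
    (hf : SpanLLP S (fun m => SpanInM m) f) : SpanInE f := by
  obtain ⟨P, l, r, rfl⟩ := exists_eq_mkSpan f
  obtain ⟨d, hfd, hdm⟩ := hf (mkSpan P (𝟙 P) r) ⟨r, rfl⟩ (mkSpan P l (𝟙 P))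
    (mkSpan b (𝟙 b) (𝟙 b)) (by rw [S.comp_id, mkSpan_id_right_comp, Category.id_comp])
  obtain ⟨k, rfl, hk⟩ := S.exists_eq_of_comp_mkSpan_id_left_eq hdm
  rw [comp_mkSpan_id_left] at hfd
  have : IsIso (r ≫ k) := spanInE_mkSpan_iff.mp (by rw [hfd]; exact ⟨l, rfl⟩)
  exact spanInE_mkSpan_iff.mpr (isIso_of_comp_eq_id_of_isIso_comp hk)

theorem spanInM_of_spanRLP {x y : C} {m : SpanHom C x y}
    (hm : SpanRLP S (fun e => SpanInE e) m) : SpanInM m := by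
  obtain ⟨P, l, r, rfl⟩ := exists_eq_mkSpan m
  obtain ⟨d, hfd, hdm⟩ := hm (mkSpan P l (𝟙 P)) ⟨l, rfl⟩ (mkSpan x (𝟙 x) (𝟙 x))
    (mkSpan P (𝟙 P) r) (by rw [S.id_comp, mkSpan_id_right_comp, Category.id_comp])
  obtain ⟨k, rfl, hk⟩ := S.exists_eq_of_mkSpan_id_right_comp_eq hfd
  rw [mkSpan_id_right_comp] at hdm
  have : IsIso (l ≫ k) := spanInM_mkSpan_iff.mp (by rw [hdm]; exact ⟨r, rfl⟩)
  exact spanInM_mkSpan_iff.mpr (isIso_of_comp_eq_id_of_isIso_comp hk)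

end SpanCat

end

theorem statement4_general (C : Type u) [Category.{v} C]
    (S : SpanCat C) :
    (∀ {a b : C} (f : SpanHom C a b),
        ∃ (x : C) (e : SpanHom C a x) (m : SpanHom C x b),
          SpanInE e ∧ SpanInM m ∧ S.comp e m = f) ∧
    (∀ {a b : C} (f : SpanHom C a b),
        SpanInE f ↔ SpanLLP S (fun m => SpanInM m) f) ∧
    (∀ {x y : C} (m : SpanHom C x y),
        SpanInM m ↔ SpanRLP S (fun e => SpanInE e) m) := by
  refine ⟨S.exists_factorization, fun f => ⟨?_, S.spanInE_of_spanLLP⟩,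
    fun m => ⟨?_, S.spanInM_of_spanRLP⟩⟩
  · rintro ⟨u, rfl⟩ x y m ⟨g, rfl⟩ p q h
    exact S.exists_lift u g p q h
  · rintro ⟨g, rfl⟩ a b f ⟨u, rfl⟩ p q h
    exact S.exists_lift u g p q h

/-- For a category `C` with pullbacks, the two canonical classes of
morphisms of `Span C` (spans with identity forward leg, and spans with identity backward
leg) form a weak factorization system: every morphism factors, the first class is
exactly the class of maps with the left lifting property against the second, and the
second is exactly the class of maps with the right lifting property against the first. -/
theorem statement4 (C : Type u) [Category.{v} C] [Limits.HasPullbacks C]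
    (S : SpanCat C) :
    (∀ {a b : C} (f : SpanHom C a b),
        ∃ (x : C) (e : SpanHom C a x) (m : SpanHom C x b),
          SpanInE e ∧ SpanInM m ∧ S.comp e m = f) ∧
    (∀ {a b : C} (f : SpanHom C a b),
        SpanInE f ↔ SpanLLP S (fun m => SpanInM m) f) ∧
    (∀ {x y : C} (m : SpanHom C x y),
        SpanInM m ↔ SpanRLP S (fun e => SpanInE e) m) :=
  statement4_general C S

end Paper
end

section
/- Let X be a codomain-discrete double category (every top-right corner consisting of a horizontal morphism g : a → b followed by a vertical morphism u : b → c can be filled into a unique square). Then the classes (E_X, M_X) of vertical and horizontal corners form a strict factorization system on the category of corners Cnr(X): every morphism of Cnr(X) factors uniquely as a morphism of E_X followed by a morphism of M_X. -/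
open CategoryTheory

universe u

namespace Paper

namespace DblCat

variable (X : DblCat.{u})

/-- In a codomain-discrete double category, fills of a given corner are unique. -/
theorem fill_unique (hX : X.CodDiscrete) {a b c : X.Obj} (g : X.Hor a b) (u : X.Ver b c)
    {x x' : X.Obj} {l : X.Ver a x} {l' : X.Ver a x'} {bo : X.Hor x c} {bo' : X.Hor x' c}
    (σ : X.Sq g l u bo) (σ' : X.Sq g l' u bo') :
    (⟨x, l, bo, σ⟩ : Σ' (bh : X.Obj) (l : X.Ver a bh) (bo : X.Hor bh c), X.Sq g l u bo)
      = ⟨x', l', bo', σ'⟩ := by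
  obtain ⟨p, -, hu⟩ := hX g u
  exact (hu _ trivial).trans (hu _ trivial).symm

/-- In a codomain-discrete double category, every square is opcartesian. -/
theorem allOpcart (hX : X.CodDiscrete) : X.AllOpcart := by
  intro a b d0 d1 t l r bo κ
  intro d e w v h α
  obtain ⟨⟨x₀, θ₀, h₀, σ₀⟩, -, hu⟩ := hX bo v
  have eq1 := X.fill_unique hX t (X.vComp r v) (X.vSq κ σ₀) α
  injection eq1 with h1 h2
  subst h1
  have h2' := eq_of_heq h2
  injection h2' with h3 h4
  subst h3
  have h4' := eq_of_heq h4
  injection h4' with h5 h6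
  subst h5
  refine ⟨⟨θ₀, σ₀⟩, ⟨rfl, h6⟩, ?_⟩
  rintro ⟨θ', σ'⟩ -
  have eq2 := (hu ⟨_, θ', _, σ'⟩ trivial).trans (hu ⟨_, θ₀, _, σ₀⟩ trivial).symm
  injection eq2 with k1 k2
  injection k2 with k3 k4
  subst k3
  have k4' := eq_of_heq k4
  injection k4' with k5 k6
  subst k6
  rfl

/-- In a codomain-discrete double category, the 2-cell relation on corners is trivial. -/
theorem cellRel_eq (hX : X.CodDiscrete) {a b : X.Obj} {c1 c2 : X.Corner a b}
    (h : X.CellRel c1 c2) : c1 = c2 := by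
  obtain ⟨m1, v1, h1⟩ := c1
  obtain ⟨m2, v2, h2⟩ := c2
  obtain ⟨θ, β, hv⟩ := h
  dsimp only at θ β hv ⊢
  have eq1 := X.fill_unique hX h1 (X.vId b) β (X.vIdSq h1)
  injection eq1 with k1 k2
  subst k1
  have k2' := eq_of_heq k2
  injection k2' with k3 k4
  subst k3
  have k4' := eq_of_heq k4
  injection k4' with k5 k6
  subst k5
  subst hv
  rw [X.vComp_id]

/-- In a codomain-discrete double category, `mkCnr` is injective. -/
theorem mkCnr_inj (hX : X.CodDiscrete) {a b : X.Obj} {c1 c2 : X.Corner a b}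
    (h : X.mkCnr c1 = X.mkCnr c2) : c1 = c2 :=
  congrArg (Quot.lift id (fun _ _ hxy => X.cellRel_eq hX hxy)) h

/-- Computation of the composite of a vertical and a horizontal corner. -/
theorem comp_EM (hX : X.CodDiscrete) (c : CnrCat X) {a x b : X.Obj}
    (u : X.Ver a x) (g : X.Hor x b) :
    c.comp (X.mkE u) (X.mkM g) = X.mkCnr ⟨x, u, g⟩ := by
  have h := c.compat u (X.hId x) (X.vId x) g (X.vId x) (X.hId x) (X.hIdSq (X.vId x))
    (X.allOpcart hX _)
  rw [X.vComp_id, X.hId_comp] at h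
  exact h

end DblCat

open DblCat in
/-- For a codomain-discrete double category `X`, the classes
`(E_X, M_X)` form a strict factorization system on the category of corners: every
morphism of `Cnr X` factors uniquely as a vertical corner followed by a horizontal
corner. -/
theorem statement5 (X : DblCat.{u}) (hX : X.CodDiscrete) (c : CnrCat X) :
    ∀ {a b : X.Obj} (f : X.CnrHom a b),
      ∃! p : Σ' (x : X.Obj) (_e : X.Ver a x), X.Hor x b,
        f = c.comp (X.mkE p.2.1) (X.mkM p.2.2) := by
  intro a b f
  obtain ⟨⟨m, u, g⟩, rfl⟩ := Quot.exists_rep f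
  refine ⟨⟨m, u, g⟩, (X.comp_EM hX c u g).symm, ?_⟩
  rintro ⟨x', e', m'⟩ hy
  rw [X.comp_EM hX c e' m'] at hy
  have h2 : (⟨m, u, g⟩ : X.Corner a b) = ⟨x', e', m'⟩ := X.mkCnr_inj hX hy
  injection h2 with k1 k2 k3
  subst k1
  have k2' := eq_of_heq k2
  have k3' := eq_of_heq k3
  subst k2'
  subst k3'
  rfl

end Paper
end

section
/- The constructions X ↦ (E_X, M_X) on Cnr(X) and (E,M) ↦ D_{E,M} define mutually inverse equivalences between the category CodDiscr of codomain-discrete double categories (with double functors) and the category SFS of strict factorization systems (with functors preserving both classes). -/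
open CategoryTheory

universe u

namespace Paper

/-- Strict factorization system. -/
structure IsStrictFS (C : Type u) [Category.{u} C]
    (E M : CategoryTheory.MorphismProperty C) : Prop where
  E_id : ∀ a : C, E (𝟙 a)
  E_comp : ∀ {a b c : C} (f : a ⟶ b) (g : b ⟶ c), E f → E g → E (f ≫ g)
  M_id : ∀ a : C, M (𝟙 a)
  M_comp : ∀ {a b c : C} (f : a ⟶ b) (g : b ⟶ c), M f → M g → M (f ≫ g)
  fac : ∀ {a c : C} (f : a ⟶ c),
    ∃! p : Σ' (b : C) (_e : a ⟶ b), (b ⟶ c),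
      E p.2.1 ∧ M p.2.2 ∧ p.2.1 ≫ p.2.2 = f

/-- Orthogonal factorization system. -/
structure IsOFS (C : Type u) [Category.{u} C]
    (E M : CategoryTheory.MorphismProperty C) : Prop where
  E_id : ∀ a : C, E (𝟙 a)
  E_comp : ∀ {a b c : C} (f : a ⟶ b) (g : b ⟶ c), E f → E g → E (f ≫ g)
  M_id : ∀ a : C, M (𝟙 a)
  M_comp : ∀ {a b c : C} (f : a ⟶ b) (g : b ⟶ c), M f → M g → M (f ≫ g)
  fac : ∀ {a c : C} (f : a ⟶ c),
    ∃ (b : C) (e : a ⟶ b) (m : b ⟶ c), E e ∧ M m ∧ e ≫ m = f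
  uniq : ∀ {a b b' c : C} (e : a ⟶ b) (m : b ⟶ c) (e' : a ⟶ b') (m' : b' ⟶ c),
    E e → M m → E e' → M m' → e ≫ m = e' ≫ m' →
    ∃! θ : b ⟶ b', e ≫ θ = e' ∧ θ ≫ m' = m
  iso : ∀ {a b : C} (f : a ⟶ b), (E f ∧ M f) ↔ IsIso f

theorem pliftHeq {p q : Prop} (h : p = q) (a : ULift.{u} (PLift p))
    (b : ULift.{u} (PLift q)) : HEq a b := by
  subst h
  obtain ⟨⟨a⟩⟩ := a
  obtain ⟨⟨b⟩⟩ := b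
  rfl

/-- The double category `D_{E,M}` of commutative squares of `C`, with vertical
morphisms in `E` and horizontal morphisms in `M`. -/
def Dbl (C : Type u) [Category.{u} C] (E M : CategoryTheory.MorphismProperty C)
    (hEid : ∀ a : C, E (𝟙 a))
    (hEcomp : ∀ {a b c : C} (f : a ⟶ b) (g : b ⟶ c), E f → E g → E (f ≫ g))
    (hMid : ∀ a : C, M (𝟙 a))
    (hMcomp : ∀ {a b c : C} (f : a ⟶ b) (g : b ⟶ c), M f → M g → M (f ≫ g)) :
    DblCat.{u} where
  Obj := C
  Ver a b := {f : a ⟶ b // E f}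
  Hor a b := {f : a ⟶ b // M f}
  vId a := ⟨𝟙 a, hEid a⟩
  vComp f g := ⟨f.1 ≫ g.1, hEcomp f.1 g.1 f.2 g.2⟩
  hId a := ⟨𝟙 a, hMid a⟩
  hComp f g := ⟨f.1 ≫ g.1, hMcomp f.1 g.1 f.2 g.2⟩
  vId_comp f := Subtype.ext (Category.id_comp f.1)
  vComp_id f := Subtype.ext (Category.comp_id f.1)
  vAssoc f g h := Subtype.ext (Category.assoc f.1 g.1 h.1)
  hId_comp f := Subtype.ext (Category.id_comp f.1)
  hComp_id f := Subtype.ext (Category.comp_id f.1)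
  hAssoc f g h := Subtype.ext (Category.assoc f.1 g.1 h.1)
  Sq t l r bo := ULift (PLift (t.1 ≫ r.1 = l.1 ≫ bo.1))
  vSq {a b c d e f t l r m l' r' bo} α β := ⟨⟨by
    have h1 := α.down.down
    have h2 := β.down.down
    show t.1 ≫ (r.1 ≫ r'.1) = (l.1 ≫ l'.1) ≫ bo.1
    rw [← Category.assoc, h1, Category.assoc, h2, ← Category.assoc]⟩⟩
  hSq {a b c a' b' c' t1 t2 l m r b1 b2} α β := ⟨⟨by
    have h1 := α.down.down
    have h2 := β.down.down
    show (t1.1 ≫ t2.1) ≫ r.1 = l.1 ≫ (b1.1 ≫ b2.1)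
    rw [Category.assoc, h2, ← Category.assoc, h1, Category.assoc]⟩⟩
  vIdSq g := ⟨⟨by simp⟩⟩
  hIdSq u := ⟨⟨by simp⟩⟩
  vSq_id_comp α := pliftHeq (by simp) _ _
  vSq_comp_id α := pliftHeq (by simp) _ _
  vSq_assoc α β γ := pliftHeq (by simp) _ _
  hSq_id_comp α := pliftHeq (by simp) _ _
  hSq_comp_id α := pliftHeq (by simp) _ _
  hSq_assoc α β γ := pliftHeq (by simp) _ _
  interchange α γ β δ := by
    apply congrArg ULift.up
    apply congrArg PLift.up
    rfl
  vIdSq_hId a := by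
    apply congrArg ULift.up
    apply congrArg PLift.up
    rfl
  vIdSq_hComp g h := by
    apply congrArg ULift.up
    apply congrArg PLift.up
    rfl
  hIdSq_vComp u v := by
    apply congrArg ULift.up
    apply congrArg PLift.up
    rfl

end Paper

namespace Paper

/-- A (strict) double functor. -/
structure DblFunctor (X Y : DblCat.{u}) : Type u where
  obj : X.Obj → Y.Obj
  ver : ∀ {a b}, X.Ver a b → Y.Ver (obj a) (obj b)
  hor : ∀ {a b}, X.Hor a b → Y.Hor (obj a) (obj b)
  sq : ∀ {a b c d} {t : X.Hor a b} {l : X.Ver a c} {r : X.Ver b d} {bo : X.Hor c d},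
    X.Sq t l r bo → Y.Sq (hor t) (ver l) (ver r) (hor bo)
  ver_id : ∀ a, ver (X.vId a) = Y.vId (obj a)
  ver_comp : ∀ {a b c} (f : X.Ver a b) (g : X.Ver b c),
    ver (X.vComp f g) = Y.vComp (ver f) (ver g)
  hor_id : ∀ a, hor (X.hId a) = Y.hId (obj a)
  hor_comp : ∀ {a b c} (f : X.Hor a b) (g : X.Hor b c),
    hor (X.hComp f g) = Y.hComp (hor f) (hor g)
  sq_vId : ∀ {a b} (g : X.Hor a b), HEq (sq (X.vIdSq g)) (Y.vIdSq (hor g))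
  sq_hId : ∀ {a b} (u : X.Ver a b), HEq (sq (X.hIdSq u)) (Y.hIdSq (ver u))
  sq_vComp : ∀ {a b c d e f : X.Obj} {t : X.Hor a b} {l : X.Ver a c} {r : X.Ver b d}
    {m : X.Hor c d} {l' : X.Ver c e} {r' : X.Ver d f} {bo : X.Hor e f}
    (α : X.Sq t l r m) (β : X.Sq m l' r' bo),
    HEq (sq (X.vSq α β)) (Y.vSq (sq α) (sq β))
  sq_hComp : ∀ {a b c a' b' c' : X.Obj} {t1 : X.Hor a b} {t2 : X.Hor b c}
    {l : X.Ver a a'} {m : X.Ver b b'} {r : X.Ver c c'} {b1 : X.Hor a' b'} {b2 : X.Hor b' c'}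
    (α : X.Sq t1 l m b1) (β : X.Sq t2 m r b2),
    HEq (sq (X.hSq α β)) (Y.hSq (sq α) (sq β))

namespace DblFunctor

theorem sqCongr {Y Z : DblCat.{u}} (G : DblFunctor Y Z) {a b c d : Y.Obj}
    {t t' : Y.Hor a b} {l l' : Y.Ver a c} {r r' : Y.Ver b d} {bo bo' : Y.Hor c d}
    (ht : t = t') (hl : l = l') (hr : r = r') (hbo : bo = bo')
    (s : Y.Sq t l r bo) (s' : Y.Sq t' l' r' bo') (hs : HEq s s') :
    HEq (G.sq s) (G.sq s') := by
  subst ht; subst hl; subst hr; subst hbo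
  exact heq_of_eq (congrArg G.sq (eq_of_heq hs))

/-- Identity double functor. -/
def id (X : DblCat.{u}) : DblFunctor X X where
  obj a := a
  ver f := f
  hor g := g
  sq s := s
  ver_id _ := rfl
  ver_comp _ _ := rfl
  hor_id _ := rfl
  hor_comp _ _ := rfl
  sq_vId _ := HEq.rfl
  sq_hId _ := HEq.rfl
  sq_vComp _ _ := HEq.rfl
  sq_hComp _ _ := HEq.rfl

/-- Composition of double functors. -/
def comp {X Y Z : DblCat.{u}} (F : DblFunctor X Y) (G : DblFunctor Y Z) :
    DblFunctor X Z where
  obj a := G.obj (F.obj a)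
  ver f := G.ver (F.ver f)
  hor g := G.hor (F.hor g)
  sq s := G.sq (F.sq s)
  ver_id a := by
    show G.ver (F.ver (X.vId a)) = Z.vId (G.obj (F.obj a))
    rw [F.ver_id, G.ver_id]
  ver_comp f g := by
    show G.ver (F.ver (X.vComp f g)) = Z.vComp (G.ver (F.ver f)) (G.ver (F.ver g))
    rw [F.ver_comp, G.ver_comp]
  hor_id a := by
    show G.hor (F.hor (X.hId a)) = Z.hId (G.obj (F.obj a))
    rw [F.hor_id, G.hor_id]
  hor_comp f g := by
    show G.hor (F.hor (X.hComp f g)) = Z.hComp (G.hor (F.hor f)) (G.hor (F.hor g))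
    rw [F.hor_comp, G.hor_comp]
  sq_vId g :=
    HEq.trans (G.sqCongr rfl (F.ver_id _) (F.ver_id _) rfl _ _ (F.sq_vId g))
      (G.sq_vId (F.hor g))
  sq_hId u :=
    HEq.trans (G.sqCongr (F.hor_id _) rfl rfl (F.hor_id _) _ _ (F.sq_hId u))
      (G.sq_hId (F.ver u))
  sq_vComp α β :=
    HEq.trans (G.sqCongr rfl (F.ver_comp _ _) (F.ver_comp _ _) rfl _ _ (F.sq_vComp α β))
      (G.sq_vComp (F.sq α) (F.sq β))
  sq_hComp α β :=
    HEq.trans (G.sqCongr (F.hor_comp _ _) rfl rfl (F.hor_comp _ _) _ _ (F.sq_hComp α β))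
      (G.sq_hComp (F.sq α) (F.sq β))

end DblFunctor

end Paper

namespace Paper

open CategoryTheory

/-- Objects of the category `SFS`: categories equipped with a strict factorization
system. -/
structure SFSObj : Type (u + 1) where
  C : Type u
  [inst : Category.{u} C]
  E : MorphismProperty C
  M : MorphismProperty C
  isSFS : IsStrictFS C E M

attribute [instance] SFSObj.inst

/-- Morphisms of `SFS`: functors preserving both classes. -/
structure SFSHom (A B : SFSObj.{u}) : Type u where
  F : A.C ⥤ B.C
  hE : ∀ {a b : A.C} (f : a ⟶ b), A.E f → B.E (F.map f)
  hM : ∀ {a b : A.C} (f : a ⟶ b), A.M f → B.M (F.map f)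

instance : Category.{u, u + 1} SFSObj.{u} where
  Hom := SFSHom
  id A := ⟨Functor.id A.C, fun _ h => h, fun _ h => h⟩
  comp f g := ⟨f.F ⋙ g.F, fun φ h => g.hE _ (f.hE φ h), fun φ h => g.hM _ (f.hM φ h)⟩

/-- The category of codomain-discrete double categories and double functors. -/
def CodDiscrObj : Type (u + 1) := {X : DblCat.{u} // X.CodDiscrete}

instance : Category.{u, u + 1} CodDiscrObj.{u} where
  Hom A B := DblFunctor A.1 B.1
  id A := DblFunctor.id A.1
  comp F G := F.comp G

/-- The double category `D_{E,M}` associated to a strict factorization system. -/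
def DblOfSFS (A : SFSObj.{u}) : DblCat.{u} :=
  Dbl A.C A.E A.M A.isSFS.E_id A.isSFS.E_comp A.isSFS.M_id A.isSFS.M_comp

/-- The double functor `D_F` associated to a morphism of strict factorization
systems. -/
def DblHomOfSFS {A B : SFSObj.{u}} (f : SFSHom A B) :
    DblFunctor (DblOfSFS A) (DblOfSFS B) where
  obj := f.F.obj
  ver g := ⟨f.F.map g.1, f.hE g.1 g.2⟩
  hor g := ⟨f.F.map g.1, f.hM g.1 g.2⟩
  sq s := ⟨⟨by
    have h := s.down.down
    show f.F.map _ ≫ f.F.map _ = f.F.map _ ≫ f.F.map _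
    erw [← f.F.map_comp, ← f.F.map_comp, h]⟩⟩
  ver_id a := Subtype.ext (f.F.map_id a)
  ver_comp g h := Subtype.ext (f.F.map_comp g.1 h.1)
  hor_id a := Subtype.ext (f.F.map_id a)
  hor_comp g h := Subtype.ext (f.F.map_comp g.1 h.1)
  sq_vId g := pliftHeq (by simp [DblOfSFS, Dbl]; erw [f.F.map_id, f.F.map_id]; simp) _ _
  sq_hId u := pliftHeq (by simp [DblOfSFS, Dbl]; erw [f.F.map_id, f.F.map_id]; simp) _ _
  sq_vComp α β := pliftHeq (by
    simp [DblOfSFS, Dbl]; erw [f.F.map_comp, f.F.map_comp, Category.assoc]) _ _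
  sq_hComp α β := pliftHeq (by
    simp [DblOfSFS, Dbl]; erw [f.F.map_comp, f.F.map_comp, Category.assoc]) _ _

/-!
A square of `D_{E,M}` with top `g` and right side `u` is exactly an `(E,M)`-factorization of
`g ≫ u`, so `D_{E,M}` is codomain-discrete. A double functor `D_{E,M} → D_{E',M'}` is
determined by its values on `E` and `M`, and `e ≫ m ↦ G e ≫ G m` is the unique functor
preserving both classes that induces it; so `D` is fully faithful.

Conversely, corners `(v, h)` of a codomain-discrete `X` compose by filling the middle corner
with its unique square. Vertical corners `(u, 1)` and horizontal corners `(1, g)` form a strict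
factorization system, `(v, h) = (v, 1) ≫ (1, h)`, and `D` of it is isomorphic to `X`: a
commuting square `(1, g) ≫ (u, 1) = (l, 1) ≫ (1, k)` of corners says precisely that `(l, k)` is
the unique filler of `(g, u)`.
-/

theorem DblOfSFS.sq_heq {A : SFSObj.{u}} {a b c d a' b' c' d' : (DblOfSFS A).Obj}
    {t : (DblOfSFS A).Hor a b} {l : (DblOfSFS A).Ver a c} {r : (DblOfSFS A).Ver b d}
    {bo : (DblOfSFS A).Hor c d} {t' : (DblOfSFS A).Hor a' b'} {l' : (DblOfSFS A).Ver a' c'}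
    {r' : (DblOfSFS A).Ver b' d'} {bo' : (DblOfSFS A).Hor c' d'}
    (s : (DblOfSFS A).Sq t l r bo) (s' : (DblOfSFS A).Sq t' l' r' bo') : HEq s s' :=
  pliftHeq (propext (iff_of_true s.down.down s'.down.down)) s s'

theorem DblFunctor.ext {X Y : DblCat.{u}} {F G : DblFunctor X Y} (hobj : F.obj = G.obj)
    (hver : ∀ {a b} (f : X.Ver a b), HEq (F.ver f) (G.ver f))
    (hhor : ∀ {a b} (g : X.Hor a b), HEq (F.hor g) (G.hor g))
    (hsq : ∀ {a b c d} {t : X.Hor a b} {l : X.Ver a c} {r : X.Ver b d} {bo : X.Hor c d}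
      (s : X.Sq t l r bo), HEq (F.sq s) (G.sq s)) : F = G := by
  obtain ⟨Fo, Fv, Fh, Fs⟩ := F
  obtain ⟨Go, Gv, Gh, Gs⟩ := G
  subst hobj
  obtain rfl : @Fv = @Gv := by funext a b f; exact eq_of_heq (hver f)
  obtain rfl : @Fh = @Gh := by funext a b g; exact eq_of_heq (hhor g)
  obtain rfl : @Fs = @Gs := by funext a b c d t l r bo s; exact eq_of_heq (hsq s)
  rfl

theorem SFSHom.ext {A B : SFSObj.{u}} {f g : SFSHom A B} (h : f.F = g.F) : f = g := by
  cases f; cases g; cases h; rfl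

namespace SFSObj

variable (A : SFSObj.{u})

noncomputable def fac {a c : A.C} (φ : a ⟶ c) : Σ' (b : A.C) (_ : a ⟶ b), b ⟶ c :=
  (A.isSFS.fac φ).choose

theorem fac_spec {a c : A.C} (φ : a ⟶ c) :
    A.E (A.fac φ).2.1 ∧ A.M (A.fac φ).2.2 ∧ (A.fac φ).2.1 ≫ (A.fac φ).2.2 = φ :=
  (A.isSFS.fac φ).choose_spec.1

theorem fac_unique {a b c : A.C} {φ : a ⟶ c} {e : a ⟶ b} {m : b ⟶ c}
    (hE : A.E e) (hM : A.M m) (hc : e ≫ m = φ) : A.fac φ = ⟨b, e, m⟩ :=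
  ((A.isSFS.fac φ).choose_spec.2 ⟨b, e, m⟩ ⟨hE, hM, hc⟩).symm

end SFSObj

theorem DblOfSFS.codDiscrete (A : SFSObj.{u}) : (DblOfSFS A).CodDiscrete := by
  intro a b c g u
  obtain ⟨hE, hM, hc⟩ := A.fac_spec (g.1 ≫ u.1)
  refine ⟨⟨_, ⟨_, hE⟩, ⟨_, hM⟩, ⟨⟨hc.symm⟩⟩⟩, trivial, ?_⟩
  rintro ⟨bh, ⟨l, hl⟩, ⟨bo, hbo⟩, s⟩ -
  have h := A.fac_unique hl hbo s.down.down.symm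
  revert hE hM hc
  rw [h]
  intros
  rfl

def dblFunctor : SFSObj.{u} ⥤ CodDiscrObj.{u} where
  obj A := ⟨DblOfSFS A, DblOfSFS.codDiscrete A⟩
  map f := DblHomOfSFS f
  map_id _ := rfl
  map_comp _ _ := rfl

namespace DblFunctor

variable {A B : SFSObj.{u}} (G : DblFunctor (DblOfSFS A) (DblOfSFS B))

theorem ver_val_comp {a b c : A.C} {e : a ⟶ b} {e' : b ⟶ c} (hE : A.E e) (hE' : A.E e') :
    (G.ver ⟨e ≫ e', A.isSFS.E_comp e e' hE hE'⟩).1 = (G.ver ⟨e, hE⟩).1 ≫ (G.ver ⟨e', hE'⟩).1 :=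
  congrArg Subtype.val (G.ver_comp ⟨e, hE⟩ ⟨e', hE'⟩)

theorem hor_val_comp {a b c : A.C} {m : a ⟶ b} {m' : b ⟶ c} (hM : A.M m) (hM' : A.M m') :
    (G.hor ⟨m ≫ m', A.isSFS.M_comp m m' hM hM'⟩).1 = (G.hor ⟨m, hM⟩).1 ≫ (G.hor ⟨m', hM'⟩).1 :=
  congrArg Subtype.val (G.hor_comp ⟨m, hM⟩ ⟨m', hM'⟩)

noncomputable def mapFac {a c : A.C} (φ : a ⟶ c) : @Quiver.Hom B.C _ (G.obj a) (G.obj c) :=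
  (G.ver ⟨_, (A.fac_spec φ).1⟩).1 ≫ (G.hor ⟨_, (A.fac_spec φ).2.1⟩).1

theorem mapFac_eq {a b c : A.C} {φ : a ⟶ c} {e : a ⟶ b} {m : b ⟶ c}
    (hE : A.E e) (hM : A.M m) (hc : e ≫ m = φ) :
    G.mapFac φ = (G.ver ⟨e, hE⟩).1 ≫ (G.hor ⟨m, hM⟩).1 := by
  have key : ∀ (p : Σ' (b : A.C) (_ : a ⟶ b), b ⟶ c) (hE' : A.E p.2.1) (hM' : A.M p.2.2),
      p = ⟨b, e, m⟩ →
      (G.ver ⟨p.2.1, hE'⟩).1 ≫ (G.hor ⟨p.2.2, hM'⟩).1 = (G.ver ⟨e, hE⟩).1 ≫ (G.hor ⟨m, hM⟩).1 := by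
    rintro _ _ _ rfl
    rfl
  exact key _ _ _ (A.fac_unique hE hM hc)

theorem mapFac_of_E {a b : A.C} {e : a ⟶ b} (hE : A.E e) : G.mapFac e = (G.ver ⟨e, hE⟩).1 := by
  rw [G.mapFac_eq hE (A.isSFS.M_id b) (Category.comp_id e)]
  erw [G.hor_id b]
  exact Category.comp_id _

theorem mapFac_of_M {a b : A.C} {m : a ⟶ b} (hM : A.M m) : G.mapFac m = (G.hor ⟨m, hM⟩).1 := by
  rw [G.mapFac_eq (A.isSFS.E_id a) hM (Category.id_comp m)]
  erw [G.ver_id a]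
  exact Category.id_comp _

theorem mapFac_id (a : A.C) : G.mapFac (𝟙 a) = @CategoryStruct.id B.C _ (G.obj a) := by
  rw [G.mapFac_of_E (A.isSFS.E_id a)]
  erw [G.ver_id a]
  rfl

/-- Factor `φ = e₁ ≫ m₁`, `ψ = e₂ ≫ m₂` and `m₁ ≫ e₂ = e₃ ≫ m₃`; the image of the last
factorization under `G` is a square, which exchanges `G m₁ ≫ G e₂` for `G e₃ ≫ G m₃`. -/
theorem mapFac_comp {a b c : A.C} (φ : a ⟶ b) (ψ : b ⟶ c) :
    G.mapFac (φ ≫ ψ) = G.mapFac φ ≫ G.mapFac ψ := by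
  obtain ⟨⟨_, e₁, m₁⟩, ⟨hE₁, hM₁, rfl⟩, -⟩ := A.isSFS.fac φ
  obtain ⟨⟨_, e₂, m₂⟩, ⟨hE₂, hM₂, rfl⟩, -⟩ := A.isSFS.fac ψ
  obtain ⟨⟨_, e₃, m₃⟩, ⟨hE₃, hM₃, hc₃⟩, -⟩ := A.isSFS.fac (m₁ ≫ e₂)
  have hsq : (G.hor ⟨m₁, hM₁⟩).1 ≫ (G.ver ⟨e₂, hE₂⟩).1 =
      (G.ver ⟨e₃, hE₃⟩).1 ≫ (G.hor ⟨m₃, hM₃⟩).1 :=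
    (G.sq (t := ⟨m₁, hM₁⟩) (l := ⟨e₃, hE₃⟩) (r := ⟨e₂, hE₂⟩) (bo := ⟨m₃, hM₃⟩)
      ⟨⟨hc₃.symm⟩⟩).down.down
  have hc : (e₁ ≫ e₃) ≫ (m₃ ≫ m₂) = (e₁ ≫ m₁) ≫ (e₂ ≫ m₂) := by
    simp only [Category.assoc, reassoc_of% hc₃]
  rw [G.mapFac_eq (A.isSFS.E_comp _ _ hE₁ hE₃) (A.isSFS.M_comp _ _ hM₃ hM₂) hc,
    G.mapFac_eq hE₁ hM₁ rfl, G.mapFac_eq hE₂ hM₂ rfl, G.ver_val_comp hE₁ hE₃,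
    G.hor_val_comp hM₃ hM₂]
  erw [Category.assoc, Category.assoc, ← Category.assoc (G.ver ⟨e₃, hE₃⟩).1, ← hsq,
    Category.assoc]

end DblFunctor

noncomputable def SFSHom.ofDblFunctor {A B : SFSObj.{u}}
    (G : DblFunctor (DblOfSFS A) (DblOfSFS B)) : SFSHom A B where
  F := { obj := G.obj, map := G.mapFac, map_id := G.mapFac_id, map_comp := G.mapFac_comp }
  hE _ hE := by
    show B.E (G.mapFac _)
    exact G.mapFac_of_E hE ▸ (G.ver ⟨_, hE⟩).2
  hM _ hM := by
    show B.M (G.mapFac _)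
    exact G.mapFac_of_M hM ▸ (G.hor ⟨_, hM⟩).2

theorem SFSHom.ofDblFunctor_dblHomOfSFS {A B : SFSObj.{u}} (f : SFSHom A B) :
    SFSHom.ofDblFunctor (DblHomOfSFS f) = f := by
  refine SFSHom.ext (CategoryTheory.Functor.ext (fun _ => rfl) fun a c φ => ?_)
  obtain ⟨⟨_, e, m⟩, ⟨hE, hM, rfl⟩, -⟩ := A.isSFS.fac φ
  show (DblHomOfSFS f).mapFac (e ≫ m) = 𝟙 _ ≫ f.F.map (e ≫ m) ≫ 𝟙 _
  rw [(DblHomOfSFS f).mapFac_eq hE hM rfl, Category.id_comp, Category.comp_id]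
  exact (f.F.map_comp e m).symm

theorem dblHomOfSFS_ofDblFunctor {A B : SFSObj.{u}} (G : DblFunctor (DblOfSFS A) (DblOfSFS B)) :
    DblHomOfSFS (SFSHom.ofDblFunctor G) = G := by
  refine DblFunctor.ext rfl (fun u => heq_of_eq (Subtype.ext ?_))
    (fun g => heq_of_eq (Subtype.ext ?_)) fun _ => DblOfSFS.sq_heq _ _
  · exact G.mapFac_of_E u.2
  · exact G.mapFac_of_M g.2

namespace DblCat

variable {X : DblCat.{u}}

def Corner.ofVer {a b : X.Obj} (u : X.Ver a b) : X.Corner a b := ⟨b, u, X.hId b⟩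

def Corner.ofHor {a b : X.Obj} (g : X.Hor a b) : X.Corner a b := ⟨a, X.vId a, g⟩

def Corner.IsVer {a b : X.Obj} (f : X.Corner a b) : Prop := ∃ u, Corner.ofVer u = f

def Corner.IsHor {a b : X.Obj} (f : X.Corner a b) : Prop := ∃ g, Corner.ofHor g = f

theorem Corner.ofVer_injective {a b : X.Obj} :
    Function.Injective (Corner.ofVer : X.Ver a b → X.Corner a b) := by
  intro u v h
  injection h

theorem Corner.ofHor_injective {a b : X.Obj} :
    Function.Injective (Corner.ofHor : X.Hor a b → X.Corner a b) := by
  intro g h e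
  injection e

namespace CodDiscrete

theorem sq_heq (hX : X.CodDiscrete) {a b bh bh' c : X.Obj} {g g' : X.Hor a b} {u u' : X.Ver b c}
    {l : X.Ver a bh} {bo : X.Hor bh c} {l' : X.Ver a bh'} {bo' : X.Hor bh' c}
    (hg : g = g') (hu : u = u') (κ : X.Sq g l u bo) (κ' : X.Sq g' l' u' bo') : HEq κ κ' := by
  subst hg hu
  exact congr_arg_heq (fun p : Σ' (bh : X.Obj) (l : X.Ver a bh) (bo : X.Hor bh c),
    X.Sq g l u bo => p.2.2.2)
    ((hX g u).unique (y₁ := ⟨_, _, _, κ⟩) (y₂ := ⟨_, _, _, κ'⟩) trivial trivial)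

variable (hX : X.CodDiscrete)

/-- The left and bottom sides of the unique square with top `g` and right side `u`. -/
noncomputable def fill {a b c : X.Obj} (g : X.Hor a b) (u : X.Ver b c) : X.Corner a c :=
  ⟨(hX g u).choose.1, (hX g u).choose.2.1, (hX g u).choose.2.2.1⟩

noncomputable def fillSq {a b c : X.Obj} (g : X.Hor a b) (u : X.Ver b c) :
    X.Sq g (hX.fill g u).v u (hX.fill g u).h :=
  (hX g u).choose.2.2.2

theorem fill_eq {a b bh c : X.Obj} {g : X.Hor a b} {u : X.Ver b c} {l : X.Ver a bh}
    {bo : X.Hor bh c} (κ : X.Sq g l u bo) : hX.fill g u = ⟨bh, l, bo⟩ :=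
  (congrArg (fun p => (⟨p.1, p.2.1, p.2.2.1⟩ : X.Corner a c))
    ((hX g u).choose_spec.2 ⟨bh, l, bo, κ⟩ trivial)).symm

noncomputable def sqOfFillEq {a b bh c : X.Obj} {g : X.Hor a b} {u : X.Ver b c}
    {l : X.Ver a bh} {bo : X.Hor bh c} (h : hX.fill g u = ⟨bh, l, bo⟩) : X.Sq g l u bo :=
  cast (congrArg (fun f : X.Corner a c => X.Sq g f.v u f.h) h) (hX.fillSq g u)

noncomputable def cornerComp {a b c : X.Obj} (f : X.Corner a b) (f' : X.Corner b c) :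
    X.Corner a c :=
  ⟨(hX.fill f.h f'.v).mid, X.vComp f.v (hX.fill f.h f'.v).v, X.hComp (hX.fill f.h f'.v).h f'.h⟩

theorem cornerComp_eq {a b c bh : X.Obj} {f : X.Corner a b} {f' : X.Corner b c}
    {l : X.Ver f.mid bh} {bo : X.Hor bh f'.mid} (κ : X.Sq f.h l f'.v bo) :
    hX.cornerComp f f' = ⟨bh, X.vComp f.v l, X.hComp bo f'.h⟩ := by
  rw [cornerComp, hX.fill_eq κ]

theorem cornerComp_ofVer_ofVer {a b c : X.Obj} (u : X.Ver a b) (v : X.Ver b c) :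
    hX.cornerComp (Corner.ofVer u) (Corner.ofVer v) = Corner.ofVer (X.vComp u v) := by
  rw [hX.cornerComp_eq (X.hIdSq v)]
  simp only [Corner.ofVer, X.hId_comp]

theorem cornerComp_ofHor_ofHor {a b c : X.Obj} (g : X.Hor a b) (h : X.Hor b c) :
    hX.cornerComp (Corner.ofHor g) (Corner.ofHor h) = Corner.ofHor (X.hComp g h) := by
  rw [hX.cornerComp_eq (X.vIdSq g)]
  simp only [Corner.ofHor, X.vId_comp]

theorem cornerComp_ofVer_ofHor {a b c : X.Obj} (u : X.Ver a b) (g : X.Hor b c) :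
    hX.cornerComp (Corner.ofVer u) (Corner.ofHor g) = ⟨b, u, g⟩ := by
  rw [hX.cornerComp_eq (X.hIdSq (X.vId b))]
  simp only [Corner.ofHor, Corner.ofVer, X.vComp_id, X.hId_comp]

theorem cornerComp_ofHor_ofVer {a b c : X.Obj} (g : X.Hor a b) (u : X.Ver b c) :
    hX.cornerComp (Corner.ofHor g) (Corner.ofVer u) = hX.fill g u := by
  rw [hX.cornerComp_eq (hX.fillSq g u)]
  simp only [Corner.ofHor, Corner.ofVer, X.vId_comp, X.hComp_id]

theorem cornerComp_ofHor_ofVer_eq_iff {a b c d : X.Obj} {g : X.Hor a b} {u : X.Ver b d}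
    {l : X.Ver a c} {bo : X.Hor c d} :
    hX.cornerComp (Corner.ofHor g) (Corner.ofVer u) =
      hX.cornerComp (Corner.ofVer l) (Corner.ofHor bo) ↔ hX.fill g u = ⟨c, l, bo⟩ := by
  rw [cornerComp_ofHor_ofVer, cornerComp_ofVer_ofHor]

/-- In a codomain-discrete double category a 2-cell between corners is an identity, so corners
themselves serve as the morphisms of `Cnr(X)`. -/
noncomputable abbrev cornerCategory : Category.{u} X.Obj where
  Hom a b := X.Corner a b
  id a := ⟨a, X.vId a, X.hId a⟩
  comp f f' := hX.cornerComp f f'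
  id_comp := by
    rintro a b ⟨m, v, h⟩
    rw [hX.cornerComp_eq (X.hIdSq v)]
    simp only [X.vId_comp, X.hId_comp]
  comp_id := by
    rintro a b ⟨m, v, h⟩
    rw [hX.cornerComp_eq (X.vIdSq h)]
    simp only [X.vComp_id, X.hComp_id]
  assoc f f' f'' := by
    show hX.cornerComp (hX.cornerComp f f') f'' = hX.cornerComp f (hX.cornerComp f' f'')
    rw [hX.cornerComp_eq (f := hX.cornerComp f f')
        (X.hSq (hX.fillSq (hX.fill f.h f'.v).h (hX.fill f'.h f''.v).v) (hX.fillSq f'.h f''.v)),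
      hX.cornerComp_eq (f' := hX.cornerComp f' f'')
        (X.vSq (hX.fillSq f.h f'.v) (hX.fillSq (hX.fill f.h f'.v).h (hX.fill f'.h f''.v).v))]
    simp only [cornerComp, X.vAssoc, X.hAssoc]

theorem isStrictFS : @IsStrictFS X.Obj hX.cornerCategory (fun _ _ f => Corner.IsVer f)
    (fun _ _ f => Corner.IsHor f) := by
  let _ := hX.cornerCategory
  refine ⟨fun a => ⟨X.vId a, rfl⟩, ?_, fun a => ⟨X.hId a, rfl⟩, ?_, ?_⟩
  · rintro _ _ _ _ _ ⟨u, rfl⟩ ⟨v, rfl⟩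
    exact ⟨X.vComp u v, (hX.cornerComp_ofVer_ofVer u v).symm⟩
  · rintro _ _ _ _ _ ⟨g, rfl⟩ ⟨h, rfl⟩
    exact ⟨X.hComp g h, (hX.cornerComp_ofHor_ofHor g h).symm⟩
  · rintro a c ⟨m, v, h⟩
    refine ⟨⟨m, Corner.ofVer v, Corner.ofHor h⟩,
      ⟨⟨v, rfl⟩, ⟨h, rfl⟩, hX.cornerComp_ofVer_ofHor v h⟩, ?_⟩
    rintro ⟨b, e, m'⟩ ⟨hE, hM, hc⟩
    dsimp only at hE hM hc
    obtain ⟨u, rfl⟩ := hE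
    obtain ⟨g, rfl⟩ := hM
    have hc' : (⟨b, u, g⟩ : X.Corner a c) = ⟨m, v, h⟩ :=
      (hX.cornerComp_ofVer_ofHor u g).symm.trans hc
    cases hc'
    rfl

noncomputable def cornerSFS : SFSObj.{u} where
  C := X.Obj
  inst := hX.cornerCategory
  E _ _ f := Corner.IsVer f
  M _ _ f := Corner.IsHor f
  isSFS := hX.isStrictFS

noncomputable def verOfCorner {a b : X.Obj} (f : (DblOfSFS hX.cornerSFS).Ver a b) :
    X.Ver a b :=
  f.2.choose

noncomputable def horOfCorner {a b : X.Obj} (f : (DblOfSFS hX.cornerSFS).Hor a b) :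
    X.Hor a b :=
  f.2.choose

theorem ofVer_verOfCorner {a b : X.Obj} (f : (DblOfSFS hX.cornerSFS).Ver a b) :
    Corner.ofVer (hX.verOfCorner f) = f.1 :=
  f.2.choose_spec

theorem ofHor_horOfCorner {a b : X.Obj} (f : (DblOfSFS hX.cornerSFS).Hor a b) :
    Corner.ofHor (hX.horOfCorner f) = f.1 :=
  f.2.choose_spec

theorem verOfCorner_eq {a b : X.Obj} {f : (DblOfSFS hX.cornerSFS).Ver a b} {u : X.Ver a b}
    (h : f.1 = Corner.ofVer u) : hX.verOfCorner f = u :=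
  Corner.ofVer_injective ((hX.ofVer_verOfCorner f).trans h)

theorem horOfCorner_eq {a b : X.Obj} {f : (DblOfSFS hX.cornerSFS).Hor a b} {g : X.Hor a b}
    (h : f.1 = Corner.ofHor g) : hX.horOfCorner f = g :=
  Corner.ofHor_injective ((hX.ofHor_horOfCorner f).trans h)

theorem verOfCorner_comp {a b c : X.Obj} (f : (DblOfSFS hX.cornerSFS).Ver a b)
    (f' : (DblOfSFS hX.cornerSFS).Ver b c) :
    hX.verOfCorner ((DblOfSFS hX.cornerSFS).vComp f f') =
      X.vComp (hX.verOfCorner f) (hX.verOfCorner f') := by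
  refine hX.verOfCorner_eq ?_
  show hX.cornerComp f.1 f'.1 = _
  rw [← hX.ofVer_verOfCorner f, ← hX.ofVer_verOfCorner f', cornerComp_ofVer_ofVer]

theorem horOfCorner_comp {a b c : X.Obj} (f : (DblOfSFS hX.cornerSFS).Hor a b)
    (f' : (DblOfSFS hX.cornerSFS).Hor b c) :
    hX.horOfCorner ((DblOfSFS hX.cornerSFS).hComp f f') =
      X.hComp (hX.horOfCorner f) (hX.horOfCorner f') := by
  refine hX.horOfCorner_eq ?_
  show hX.cornerComp f.1 f'.1 = _
  rw [← hX.ofHor_horOfCorner f, ← hX.ofHor_horOfCorner f', cornerComp_ofHor_ofHor]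

theorem fill_eq_of_cornerSq {a b c d : X.Obj} {t : (DblOfSFS hX.cornerSFS).Hor a b}
    {l : (DblOfSFS hX.cornerSFS).Ver a c} {r : (DblOfSFS hX.cornerSFS).Ver b d}
    {bo : (DblOfSFS hX.cornerSFS).Hor c d} (s : (DblOfSFS hX.cornerSFS).Sq t l r bo) :
    hX.fill (hX.horOfCorner t) (hX.verOfCorner r) = ⟨c, hX.verOfCorner l, hX.horOfCorner bo⟩ := by
  rw [← cornerComp_ofHor_ofVer_eq_iff, ofHor_horOfCorner, ofVer_verOfCorner, ofVer_verOfCorner,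
    ofHor_horOfCorner]
  exact s.down.down

noncomputable def ofCornerDbl : DblFunctor (DblOfSFS hX.cornerSFS) X where
  obj a := a
  ver f := hX.verOfCorner f
  hor f := hX.horOfCorner f
  sq s := hX.sqOfFillEq (hX.fill_eq_of_cornerSq s)
  ver_id _ := hX.verOfCorner_eq rfl
  ver_comp := hX.verOfCorner_comp
  hor_id _ := hX.horOfCorner_eq rfl
  hor_comp := hX.horOfCorner_comp
  sq_vId _ := hX.sq_heq rfl (hX.verOfCorner_eq rfl) _ _
  sq_hId _ := hX.sq_heq (hX.horOfCorner_eq rfl) rfl _ _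
  sq_vComp _ _ := hX.sq_heq rfl (hX.verOfCorner_comp _ _) _ _
  sq_hComp _ _ := hX.sq_heq (hX.horOfCorner_comp _ _) rfl _ _

def toCornerDbl : DblFunctor X (DblOfSFS hX.cornerSFS) where
  obj a := a
  ver u := ⟨Corner.ofVer u, u, rfl⟩
  hor g := ⟨Corner.ofHor g, g, rfl⟩
  sq κ := ⟨⟨hX.cornerComp_ofHor_ofVer_eq_iff.2 (hX.fill_eq κ)⟩⟩
  ver_id _ := rfl
  ver_comp u v := Subtype.ext (hX.cornerComp_ofVer_ofVer u v).symm
  hor_id _ := rfl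
  hor_comp g h := Subtype.ext (hX.cornerComp_ofHor_ofHor g h).symm
  sq_vId _ := DblOfSFS.sq_heq (A := hX.cornerSFS) _ _
  sq_hId _ := DblOfSFS.sq_heq (A := hX.cornerSFS) _ _
  sq_vComp _ _ := DblOfSFS.sq_heq (A := hX.cornerSFS) _ _
  sq_hComp _ _ := DblOfSFS.sq_heq (A := hX.cornerSFS) _ _

theorem ofCornerDbl_comp_toCornerDbl :
    hX.ofCornerDbl.comp hX.toCornerDbl = DblFunctor.id (DblOfSFS hX.cornerSFS) := by
  refine DblFunctor.ext (funext fun _ => rfl) (fun f => ?_) (fun f => ?_)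
    fun _ => DblOfSFS.sq_heq _ _
  · exact heq_of_eq (Subtype.ext (hX.ofVer_verOfCorner f))
  · exact heq_of_eq (Subtype.ext (hX.ofHor_horOfCorner f))

theorem toCornerDbl_comp_ofCornerDbl : hX.toCornerDbl.comp hX.ofCornerDbl = DblFunctor.id X := by
  refine DblFunctor.ext (funext fun _ => rfl) (fun _ => ?_) (fun _ => ?_) fun _ => ?_
  · exact heq_of_eq (hX.verOfCorner_eq rfl)
  · exact heq_of_eq (hX.horOfCorner_eq rfl)
  · exact hX.sq_heq (hX.horOfCorner_eq rfl) (hX.verOfCorner_eq rfl) _ _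

end CodDiscrete

end DblCat

open DblCat.CodDiscrete in
noncomputable def cornerIso (Y : CodDiscrObj.{u}) : dblFunctor.obj (cornerSFS Y.2) ≅ Y where
  hom := ofCornerDbl Y.2
  inv := toCornerDbl Y.2
  hom_inv_id := ofCornerDbl_comp_toCornerDbl Y.2
  inv_hom_id := toCornerDbl_comp_ofCornerDbl Y.2

instance : dblFunctor.{u}.Faithful where
  map_injective {_ _} f g h := by
    rw [← SFSHom.ofDblFunctor_dblHomOfSFS f, ← SFSHom.ofDblFunctor_dblHomOfSFS g]
    exact congrArg SFSHom.ofDblFunctor h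

instance : dblFunctor.{u}.Full where
  map_surjective G := ⟨SFSHom.ofDblFunctor G, dblHomOfSFS_ofDblFunctor G⟩

instance : dblFunctor.{u}.EssSurj where
  mem_essImage Y := ⟨_, ⟨cornerIso Y⟩⟩

open DblCat in
/-- The constructions `X ↦ (E_X, M_X)` on `Cnr X` and
`(E,M) ↦ D_{E,M}` define mutually inverse equivalences between the category of
codomain-discrete double categories and the category of strict factorization systems.
We formalize this by asserting that the functor `SFS → CodDiscr`, acting as `D` on
objects and morphisms, is an equivalence of categories (its quasi-inverse being the
category-of-corners construction). -/
theorem statement7 :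
    ∃ Fd : SFSObj.{u} ⥤ CodDiscrObj.{u},
      (∀ A : SFSObj.{u}, (Fd.obj A).1 = DblOfSFS A) ∧
      (∀ {A B : SFSObj.{u}} (f : A ⟶ B), HEq (Fd.map f) (DblHomOfSFS f)) ∧
      Fd.IsEquivalence :=
  ⟨dblFunctor, fun _ => rfl, fun _ => HEq.rfl, { }⟩

end Paper
end

section
/- Let X be a double category in which every top-right corner can be filled into a square and every square is bicartesian. Then every morphism of Cnr(X) that lies in both E_X (vertical corners [u,1]) and M_X (horizontal corners [1,h]) is an isomorphism of Cnr(X). -/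
open CategoryTheory

universe u

namespace Paper

open DblCat in
theorem cellRel_equiv (X : DblCat.{u}) (hbi : X.AllBicart) (a b : X.Obj) :
    Equivalence (fun c1 c2 : X.Corner a b => X.CellRel c1 c2) := by
  constructor
  · intro c; exact ⟨X.vId c.mid, X.vIdSq c.h, X.vComp_id c.v⟩
  · rintro c1 c2 ⟨θ, β, hθ⟩
    have α : X.Sq c1.h (X.vId c1.mid) (X.vComp (X.vId b) (X.vId b)) c1.h := by
      rw [X.vId_comp]; exact X.vIdSq c1.h
    obtain ⟨⟨θ', β'⟩, ⟨h1, _⟩, _⟩ := (hbi β).1 (X.vId c1.mid) (X.vId b) c1.h α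
    refine ⟨θ', β', ?_⟩
    rw [← hθ, X.vAssoc, h1, X.vComp_id]
  · rintro c1 c2 c3 ⟨θ, β, hθ⟩ ⟨θ', β', hθ'⟩
    have β'' := X.vSq β β'
    rw [X.vId_comp] at β''
    exact ⟨X.vComp θ θ', β'', by rw [← X.vAssoc, hθ, hθ']⟩

end Paper

namespace Paper

open DblCat in
/-- If every top-right corner of `X` fills into a square and every
square is bicartesian, then `E_X ∩ M_X ⊆ {isomorphisms of Cnr X}`. -/
theorem statement9 (X : DblCat.{u}) (hfill : X.CornerFill) (hbi : X.AllBicart)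
    (c : CnrCat X) {a b : X.Obj} (f : X.CnrHom a b) :
    X.InE f → X.InM f → X.CnrIso c.toCnrStruct f := by
  rintro ⟨u, hu⟩ ⟨g, hg⟩
  have hEq : X.mkCnr ⟨b, u, X.hId b⟩ = X.mkCnr ⟨a, X.vId a, g⟩ := hu.symm.trans hg
  have hrel : X.CellRel ⟨b, u, X.hId b⟩ ⟨a, X.vId a, g⟩ :=
    ((cellRel_equiv X hbi a b).eqvGen_iff).mp (Quot.eq.mp hEq)
  obtain ⟨θ', β', hθ'⟩ := hrel
  refine ⟨X.mkE θ', ?_, ?_⟩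
  · rw [hu]
    have h1 := c.compat u (X.hId b) θ' (X.hId a) θ' (X.hId a) (X.hIdSq θ') (hbi _).1
    have h2 : (⟨a, X.vComp u θ', X.hComp (X.hId a) (X.hId a)⟩ : X.Corner a a)
        = ⟨a, X.vId a, X.hId a⟩ := by rw [hθ', X.hId_comp]
    calc c.comp (X.mkE u) (X.mkE θ') = _ := h1
      _ = X.cnrId a := by rw [h2]; rfl
  · rw [hg]
    have h1 := c.compat θ' (X.hId a) (X.vId a) g (X.vId a) (X.hId a) (X.hIdSq (X.vId a)) (hbi _).1
    have h2 : (⟨a, X.vComp θ' (X.vId a), X.hComp (X.hId a) g⟩ : X.Corner b b)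
        = ⟨a, θ', g⟩ := by rw [X.vComp_id, X.hId_comp]
    calc c.comp (X.mkE θ') (X.mkM g) = _ := h1
      _ = X.mkCnr ⟨a, θ', g⟩ := by rw [h2]
      _ = X.cnrId b := (Quot.sound ⟨θ', β', X.vId_comp θ'⟩).symm


end Paper
end

section
/- Let X be a double category in which every top-right corner can be filled into a square and every square is bicartesian. Then a morphism [u, g] of Cnr(X) is an isomorphism if and only if both the vertical morphism u and the horizontal morphism g are isomorphisms (in X0 and in h(X) respectively). -/
open CategoryTheory

universe u

namespace Paper

namespace DblCat

variable {X : DblCat.{u}}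

/-- Transport a square along an equality of its top boundary. -/
def castT {a b c d : X.Obj} {t t' : X.Hor a b} {l : X.Ver a c} {r : X.Ver b d}
    {bo : X.Hor c d} (e : t = t') (s : X.Sq t l r bo) : X.Sq t' l r bo := e ▸ s

theorem heq_castT {a b c d : X.Obj} {t t' : X.Hor a b} {l : X.Ver a c} {r : X.Ver b d}
    {bo : X.Hor c d} (e : t = t') (s : X.Sq t l r bo) : HEq (castT e s) s := by
  cases e; rfl

/-- Transport a square along an equality of its right boundary. -/
def castR {a b c d : X.Obj} {t : X.Hor a b} {l : X.Ver a c} {r r' : X.Ver b d}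
    {bo : X.Hor c d} (e : r = r') (s : X.Sq t l r bo) : X.Sq t l r' bo := e ▸ s

/-- From any square with identity right boundary, opcartesianness produces a reversed
square together with a one-sided inverse for its left boundary. -/
theorem opcartStep (hbi : X.AllBicart) {b m1 m2 : X.Obj} {h1 : X.Hor m1 b}
    {h2 : X.Hor m2 b} {θ : X.Ver m1 m2} (β : X.Sq h1 θ (X.vId b) h2) :
    ∃ (θ₀ : X.Ver m2 m1) (_τ : X.Sq h2 θ₀ (X.vId b) h1),
      X.vComp θ θ₀ = X.vId m1 := by
  obtain ⟨p, ⟨hc, -⟩, -⟩ :=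
    (hbi β).1 (X.vId m1) (X.vId b) h1 (castR ((X.vId_comp (X.vId b)).symm) (X.vIdSq h1))
  exact ⟨p.1, p.2, hc⟩

/-- The left boundary of any square with identity right boundary is invertible. -/
theorem lemB (hbi : X.AllBicart) {b m1 m2 : X.Obj} {h1 : X.Hor m1 b}
    {h2 : X.Hor m2 b} {θ : X.Ver m1 m2} (β : X.Sq h1 θ (X.vId b) h2) :
    ∃ (θ₀ : X.Ver m2 m1) (_τ : X.Sq h2 θ₀ (X.vId b) h1),
      X.vComp θ θ₀ = X.vId m1 ∧ X.vComp θ₀ θ = X.vId m2 := by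
  obtain ⟨θ₀, τ, hθθ₀⟩ := opcartStep hbi β
  obtain ⟨θ₁, -, hθ₀θ₁⟩ := opcartStep hbi τ
  have hθ1 : θ₁ = θ := by
    calc θ₁ = X.vComp (X.vId m1) θ₁ := (X.vId_comp _).symm
      _ = X.vComp (X.vComp θ θ₀) θ₁ := by rw [hθθ₀]
      _ = X.vComp θ (X.vComp θ₀ θ₁) := X.vAssoc _ _ _
      _ = X.vComp θ (X.vId m2) := by rw [hθ₀θ₁]
      _ = θ := X.vComp_id _
  exact ⟨θ₀, τ, hθθ₀, hθ1 ▸ hθ₀θ₁⟩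

/-- Extraction of bottom boundaries: a square heq to a horizontal identity square
has identity bottom boundary. -/
theorem ext_bottom (hbi : X.AllBicart) {a m : X.Obj} (r : X.Ver a m) {k : X.Hor m m}
    (T : X.Sq (X.hId a) r r k) (hT : HEq T (X.hIdSq r)) : k = X.hId m := by
  obtain ⟨p0, -, hup⟩ := (hbi (X.hIdSq r)).2 r (X.hId m) (X.hIdSq r)
  have e1 := hup ⟨X.hId m, X.hIdSq r⟩ (X.hSq_comp_id (X.hIdSq r))
  have e2 := hup ⟨k, T⟩ ((X.hSq_comp_id T).trans hT)
  have := e2.trans e1.symm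
  exact congrArg PSigma.fst this

/-- Key lemma: any square with identity right boundary and identity bottom boundary
has invertible left boundary and invertible top boundary. -/
theorem key (hbi : X.AllBicart) {m a : X.Obj} {q : X.Hor m a} {θ : X.Ver m a}
    (β : X.Sq q θ (X.vId a) (X.hId a)) : X.VIso θ ∧ X.HIso q := by
  obtain ⟨θ₀, τ, hA, hB⟩ := lemB hbi β
  -- step (i) : a left inverse ψ for q
  obtain ⟨⟨ψ, δ⟩, hp1, -⟩ := (hbi τ).2 (X.vId a) (X.hId a) (X.vIdSq (X.hId a))
  have hi : X.hComp ψ q = X.hId a := by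
    refine ext_bottom hbi (X.vId a) (castT (X.hId_comp (X.hId a)) (X.hSq δ τ)) ?_
    rw [← X.vIdSq_hId]
    exact (heq_castT _ _).trans hp1
  -- step (ii) : a left inverse ψ' for ψ
  obtain ⟨⟨ψ', S⟩, hp2, -⟩ := (hbi δ).2 θ₀ (X.hId m) (X.hIdSq θ₀)
  have hii : X.hComp ψ' ψ = X.hId m := by
    refine ext_bottom hbi θ₀ (castT (X.hId_comp (X.hId a)) (X.hSq S δ)) ?_
    exact (heq_castT _ _).trans hp2
  have hq : q = ψ' := by
    calc q = X.hComp (X.hId m) q := (X.hId_comp q).symm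
      _ = X.hComp (X.hComp ψ' ψ) q := by rw [hii]
      _ = X.hComp ψ' (X.hComp ψ q) := X.hAssoc _ _ _
      _ = X.hComp ψ' (X.hId a) := by rw [hi]
      _ = ψ' := X.hComp_id _
  refine ⟨⟨θ₀, hA, hB⟩, ⟨ψ, ?_, hi⟩⟩
  rw [hq]; exact hii

theorem visoOfCompId {a b : X.Obj} {p : X.Ver a b} {θ : X.Ver b a}
    (hθ : X.VIso θ) (h : X.vComp p θ = X.vId a) : X.VIso p := by
  obtain ⟨θ', h1, h2⟩ := hθ
  refine ⟨θ, h, ?_⟩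
  calc X.vComp θ p = X.vComp (X.vComp θ p) (X.vId b) := (X.vComp_id _).symm
    _ = X.vComp (X.vComp θ p) (X.vComp θ θ') := by rw [h1]
    _ = X.vComp θ (X.vComp p (X.vComp θ θ')) := X.vAssoc _ _ _
    _ = X.vComp θ (X.vComp (X.vComp p θ) θ') := by rw [X.vAssoc]
    _ = X.vComp θ (X.vComp (X.vId a) θ') := by rw [h]
    _ = X.vComp θ θ' := by rw [X.vId_comp]
    _ = X.vId b := h1

theorem cellRel_refl {a b : X.Obj} (c : X.Corner a b) : X.CellRel c c :=
  ⟨X.vId c.mid, X.vIdSq c.h, X.vComp_id c.v⟩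

theorem cellRel_symm (hbi : X.AllBicart) {a b : X.Obj} {c1 c2 : X.Corner a b}
    (h : X.CellRel c1 c2) : X.CellRel c2 c1 := by
  obtain ⟨θ, β, hv⟩ := h
  obtain ⟨θ₀, τ, hθ⟩ := opcartStep hbi β
  refine ⟨θ₀, τ, ?_⟩
  rw [← hv, X.vAssoc, hθ, X.vComp_id]

theorem cellRel_trans {a b : X.Obj} {c1 c2 c3 : X.Corner a b}
    (h : X.CellRel c1 c2) (h' : X.CellRel c2 c3) : X.CellRel c1 c3 := by
  obtain ⟨θ, β, hv⟩ := h
  obtain ⟨θ', β', hv'⟩ := h'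
  refine ⟨X.vComp θ θ', castR (X.vId_comp (X.vId b)) (X.vSq β β'), ?_⟩
  rw [← X.vAssoc, hv, hv']

theorem cnr_eq_iff (hbi : X.AllBicart) {a b : X.Obj} {c1 c2 : X.Corner a b} :
    X.mkCnr c1 = X.mkCnr c2 ↔ X.CellRel c1 c2 := by
  constructor
  · intro h
    have h' := Quot.eq.mp h
    clear h
    induction h' with
    | rel _ _ h => exact h
    | refl _ => exact cellRel_refl _
    | symm _ _ _ ih => exact cellRel_symm hbi ih
    | trans _ _ _ _ _ ih1 ih2 => exact cellRel_trans ih1 ih2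
  · exact Quot.sound

theorem compE (c : CnrCat X) (hbi : X.AllBicart) {a x' b : X.Obj}
    (u1 : X.Ver a x') (u2 : X.Ver x' b) :
    c.comp (X.mkE u1) (X.mkE u2) = X.mkE (X.vComp u1 u2) := by
  have h := c.compat u1 (X.hId x') u2 (X.hId b) u2 (X.hId b) (X.hIdSq u2)
    (hbi (X.hIdSq u2)).1
  rw [X.hId_comp] at h
  exact h

theorem compM (c : CnrCat X) (hbi : X.AllBicart) {a x' b : X.Obj}
    (g1 : X.Hor a x') (g2 : X.Hor x' b) :
    c.comp (X.mkM g1) (X.mkM g2) = X.mkM (X.hComp g1 g2) := by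
  have h := c.compat (X.vId a) g1 (X.vId x') g2 (X.vId a) g1 (X.vIdSq g1)
    (hbi (X.vIdSq g1)).1
  rw [X.vId_comp] at h
  exact h

theorem splitEM (c : CnrCat X) (hbi : X.AllBicart) {a x' b : X.Obj}
    (u : X.Ver a x') (g : X.Hor x' b) :
    c.comp (X.mkE u) (X.mkM g) = X.mkCnr ⟨x', u, g⟩ := by
  have h := c.compat u (X.hId x') (X.vId x') g (X.vId x') (X.hId x')
    (X.hIdSq (X.vId x')) (hbi (X.hIdSq (X.vId x'))).1
  rw [X.vComp_id, X.hId_comp] at h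
  exact h

end DblCat

end Paper

namespace Paper

open DblCat in
/-- If every top-right corner of `X` fills into a square and every
square is bicartesian, then a corner `[u, g]` is an isomorphism of `Cnr X` if and only
if `u` is an isomorphism of vertical morphisms and `g` is an isomorphism of horizontal
morphisms. -/
theorem statement10 (X : DblCat.{u}) (hfill : X.CornerFill) (hbi : X.AllBicart)
    (c : CnrCat X) {a x b : X.Obj} (u : X.Ver a x) (g : X.Hor x b) :
    X.CnrIso c.toCnrStruct (X.mkCnr ⟨x, u, g⟩) ↔ X.VIso u ∧ X.HIso g := by
  constructor
  · -- forward direction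
    rintro ⟨finv, hI1, hI2⟩
    obtain ⟨⟨m', v, h⟩, rfl⟩ := Quot.exists_rep finv
    have hI1' : c.comp (X.mkCnr ⟨x, u, g⟩) (X.mkCnr ⟨m', v, h⟩) = X.cnrId a := hI1
    have hI2' : c.comp (X.mkCnr ⟨m', v, h⟩) (X.mkCnr ⟨x, u, g⟩) = X.cnrId b := hI2
    obtain ⟨xh, w, bo, ⟨κ⟩⟩ := hfill g v
    have e1 := c.compat u g v h w bo κ (hbi κ).1
    have rel1 : X.CellRel ⟨xh, X.vComp u w, X.hComp bo h⟩ ⟨a, X.vId a, X.hId a⟩ :=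
      (cnr_eq_iff hbi).mp (e1.symm.trans hI1')
    obtain ⟨θ, β, hvθ⟩ := rel1
    obtain ⟨hVθ, -⟩ := key hbi β
    -- the element d₂ of the corner category
    obtain ⟨y₂, w₂, bo₂, ⟨κ₂⟩⟩ := hfill (X.hComp bo h) u
    have hMgFinv : c.comp (X.mkM g) (X.mkCnr ⟨m', v, h⟩) = X.mkCnr ⟨xh, w, X.hComp bo h⟩ := by
      have h' := c.compat (X.vId x) g v h w bo κ (hbi κ).1
      rw [X.vId_comp] at h'
      exact h'
    have hD : c.comp (c.comp (X.mkM g) (X.mkCnr ⟨m', v, h⟩)) (X.mkE u)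
        = X.mkCnr ⟨y₂, X.vComp w w₂, bo₂⟩ := by
      rw [hMgFinv]
      have h' := c.compat w (X.hComp bo h) u (X.hId x) w₂ bo₂ κ₂ (hbi κ₂).1
      rw [X.hComp_id] at h'
      exact h'
    have hF : c.comp (X.mkE u) (X.mkM g) = X.mkCnr ⟨x, u, g⟩ := splitEM c hbi u g
    have eB : c.comp (X.mkCnr ⟨y₂, X.vComp w w₂, bo₂⟩) (X.mkM g) = X.mkM g := by
      rw [← hD, c.assoc, hF, c.assoc, hI2', c.comp_id]
    have eB' : X.mkCnr ⟨y₂, X.vComp w w₂, X.hComp bo₂ g⟩ = X.mkM g := by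
      have h' := c.compat (X.vComp w w₂) bo₂ (X.vId x) g (X.vId y₂) bo₂ (X.vIdSq bo₂)
        (hbi (X.vIdSq bo₂)).1
      rw [X.vComp_id] at h'
      exact h'.symm.trans eB
    obtain ⟨ΘB, SB, hPB⟩ := (cnr_eq_iff hbi).mp eB'
    have hVΘB : X.VIso ΘB := by
      obtain ⟨t0, -, h1', h2'⟩ := lemB hbi SB
      exact ⟨t0, h1', h2'⟩
    have hVP : X.VIso (X.vComp w w₂) := visoOfCompId hVΘB hPB
    -- `u` is a vertical isomorphism
    obtain ⟨θ₀, hθ1, hθ2⟩ := hVθ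
    obtain ⟨Pi, hPi1, hPi2⟩ := hVP
    have huw : X.vComp u w = θ₀ := by
      calc X.vComp u w = X.vComp (X.vComp u w) (X.vId xh) := (X.vComp_id _).symm
        _ = X.vComp (X.vComp u w) (X.vComp θ θ₀) := by rw [hθ1]
        _ = X.vComp (X.vComp (X.vComp u w) θ) θ₀ := (X.vAssoc _ _ _).symm
        _ = X.vComp (X.vId a) θ₀ := by rw [hvθ]
        _ = θ₀ := X.vId_comp _
    have hwrw : X.vComp w (X.vComp w₂ Pi) = X.vId x := by
      rw [← X.vAssoc]; exact hPi1
    have hsww : X.vComp (X.vComp θ u) w = X.vId xh := by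
      rw [X.vAssoc, huw, hθ1]
    have hrs : X.vComp θ u = X.vComp w₂ Pi := by
      calc X.vComp θ u = X.vComp (X.vComp θ u) (X.vId x) := (X.vComp_id _).symm
        _ = X.vComp (X.vComp θ u) (X.vComp w (X.vComp w₂ Pi)) := by rw [hwrw]
        _ = X.vComp (X.vComp (X.vComp θ u) w) (X.vComp w₂ Pi) := (X.vAssoc _ _ _).symm
        _ = X.vComp (X.vId xh) (X.vComp w₂ Pi) := by rw [hsww]
        _ = X.vComp w₂ Pi := X.vId_comp _
    have hu1 : X.vComp u (X.vComp w θ) = X.vId a := by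
      rw [← X.vAssoc]; exact hvθ
    have hu2 : X.vComp (X.vComp w θ) u = X.vId x := by
      calc X.vComp (X.vComp w θ) u = X.vComp w (X.vComp θ u) := X.vAssoc _ _ _
        _ = X.vComp w (X.vComp w₂ Pi) := by rw [hrs]
        _ = X.vId x := hwrw
    have hVu : X.VIso u := ⟨X.vComp w θ, hu1, hu2⟩
    -- `g` is a horizontal isomorphism
    have hMgInv1 : c.comp (X.mkM g) (c.comp (X.mkCnr ⟨m', v, h⟩) (X.mkE u)) = X.cnrId x := by
      have hMg : c.comp (X.mkE (X.vComp w θ)) (X.mkCnr ⟨x, u, g⟩) = X.mkM g := by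
        rw [← hF, ← c.assoc, compE c hbi (X.vComp w θ) u, hu2]
        exact c.id_comp _
      rw [← hMg, c.assoc, ← c.assoc (X.mkCnr ⟨x, u, g⟩), hI1', c.id_comp,
        compE c hbi (X.vComp w θ) u, hu2]
      rfl
    have hMgInv2 : c.comp (c.comp (X.mkCnr ⟨m', v, h⟩) (X.mkE u)) (X.mkM g) = X.cnrId b := by
      rw [c.assoc, hF, hI2']
    obtain ⟨⟨m₃, v₃, h₃⟩, hcc3⟩ := Quot.exists_rep (c.comp (X.mkCnr ⟨m', v, h⟩) (X.mkE u))
    have hc3 : c.comp (X.mkCnr ⟨m', v, h⟩) (X.mkE u) = X.mkCnr ⟨m₃, v₃, h₃⟩ := hcc3.symm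
    rw [hc3] at hMgInv1 hMgInv2
    obtain ⟨x₆, w₆, bo₆, ⟨κ₆⟩⟩ := hfill g v₃
    have r1 : X.mkCnr ⟨x₆, w₆, X.hComp bo₆ h₃⟩ = X.cnrId x := by
      have h' := c.compat (X.vId x) g v₃ h₃ w₆ bo₆ κ₆ (hbi κ₆).1
      rw [X.vId_comp] at h'
      exact h'.symm.trans hMgInv1
    obtain ⟨θM, βM, -⟩ := (cnr_eq_iff hbi).mp r1
    have hH1 : X.HIso (X.hComp bo₆ h₃) := (key hbi βM).2
    have r2 : X.mkCnr ⟨m₃, v₃, X.hComp h₃ g⟩ = X.cnrId b := by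
      have h' := c.compat v₃ h₃ (X.vId x) g (X.vId m₃) h₃ (X.vIdSq h₃) (hbi (X.vIdSq h₃)).1
      rw [X.vComp_id] at h'
      exact h'.symm.trans hMgInv2
    obtain ⟨θM2, βM2, -⟩ := (cnr_eq_iff hbi).mp r2
    have hH2 : X.HIso (X.hComp h₃ g) := (key hbi βM2).2
    obtain ⟨J₁, hJ1a, hJ1b⟩ := hH1
    obtain ⟨J₂, hJ2a, hJ2b⟩ := hH2
    have hR₃ : X.hComp h₃ (X.hComp g J₂) = X.hId m₃ := by
      rw [← X.hAssoc]; exact hJ2a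
    have hL₃ : X.hComp (X.hComp J₁ bo₆) h₃ = X.hId x := by
      rw [X.hAssoc]; exact hJ1b
    have hRL : X.hComp J₁ bo₆ = X.hComp g J₂ := by
      calc X.hComp J₁ bo₆ = X.hComp (X.hComp J₁ bo₆) (X.hId m₃) := (X.hComp_id _).symm
        _ = X.hComp (X.hComp J₁ bo₆) (X.hComp h₃ (X.hComp g J₂)) := by rw [hR₃]
        _ = X.hComp (X.hComp (X.hComp J₁ bo₆) h₃) (X.hComp g J₂) := (X.hAssoc _ _ _).symm
        _ = X.hComp (X.hId x) (X.hComp g J₂) := by rw [hL₃]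
        _ = X.hComp g J₂ := X.hId_comp _
    have hgJh : X.hComp g (X.hComp J₂ h₃) = X.hId x := by
      calc X.hComp g (X.hComp J₂ h₃) = X.hComp (X.hComp g J₂) h₃ := (X.hAssoc _ _ _).symm
        _ = X.hComp (X.hComp J₁ bo₆) h₃ := by rw [hRL]
        _ = X.hId x := hL₃
    have hJhg : X.hComp (X.hComp J₂ h₃) g = X.hId b := by
      rw [X.hAssoc]; exact hJ2b
    exact ⟨hVu, ⟨X.hComp J₂ h₃, hgJh, hJhg⟩⟩
  · -- backward direction
    rintro ⟨⟨u', hu1, hu2⟩, ⟨g', hg1, hg2⟩⟩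
    refine ⟨c.comp (X.mkM g') (X.mkE u'), ?_, ?_⟩
    · rw [← splitEM c hbi u g, c.assoc, ← c.assoc (X.mkM g) (X.mkM g') (X.mkE u'),
        compM c hbi g g', hg1, show X.mkM (X.hId x) = X.cnrId x from rfl, c.id_comp,
        compE c hbi u u', hu1]
      rfl
    · rw [← splitEM c hbi u g, c.assoc, ← c.assoc (X.mkE u') (X.mkE u) (X.mkM g),
        compE c hbi u' u, hu2, show X.mkE (X.vId x) = X.cnrId x from rfl, c.id_comp,
        compM c hbi g' g, hg2]
      rfl


end Paper
end
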